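/- arXiv:2308.11434 — 7 statements merged into one kernel-verified Lean document; each statement's English description precedes it below -/
import Mathlib

section
/- Let G be a finite group, H a subgroup of G, and x ∈ G \ H. For any t ∈ HxH and y ∈ Hx⁻¹H, the right coset Ht contains exactly |H ∩ H^x| elements whose inverses lie in Hy; that is, |(Ht)⁻¹ ∩ Hy| = |H ∩ H^x|. -/
open scoped Pointwise

theorem stmt3 {G : Type*} [Group G] [Fintype G] (H : Subgroup G) (x t y : G)
    (hx : x ∉ H)
    (ht : t ∈ (H : Set G) * {x} * (H : Set G))
    (hy : y ∈ (H : Set G) * {x⁻¹} * (H : Set G)) :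
    ((((H : Set G) * {t})⁻¹) ∩ ((H : Set G) * {y})).ncard
      = ((H : Set G) ∩ ((fun g => x⁻¹ * g * x) '' (H : Set G))).ncard := by
  obtain ⟨p, ⟨h1, hh1, x', hx', rfl⟩, h2, hh2, rfl⟩ := ht
  obtain ⟨q, ⟨k1, hk1, x'', hx'', rfl⟩, k2, hk2, rfl⟩ := hy
  rw [Set.mem_singleton_iff] at hx' hx''
  have hx'1 : x' = x := hx'
  have hx''1 : x'' = x⁻¹ := hx''
  subst x' x''
  set A : Set G := (((H : Set G) * {h1 * x * h2})⁻¹) ∩ ((H : Set G) * {k1 * x⁻¹ * k2}) with hA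
  have hinj : Function.Injective (fun u : G => h2 * u * k2⁻¹ * x) := by
    intro u v huv
    simpa using huv
  have key : (fun u : G => h2 * u * k2⁻¹ * x) '' A
      = (H : Set G) ∩ ((fun g => x⁻¹ * g * x) '' (H : Set G)) := by
    ext w
    constructor
    · rintro ⟨u, ⟨hu1, hu2⟩, rfl⟩
      rw [Set.mem_inv] at hu1
      obtain ⟨a, ha, s, hs, hst⟩ := hu1
      rw [Set.mem_singleton_iff] at hs; subst hs
      obtain ⟨c, hc, s', hs', hst'⟩ := hu2
      rw [Set.mem_singleton_iff] at hs'; subst hs'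
      have hst2 : a * (h1 * x * h2) = u⁻¹ := hst
      have hst'2 : c * (k1 * x⁻¹ * k2) = u := hst'
      have hu : u = (h1 * x * h2)⁻¹ * a⁻¹ := by rw [← inv_inv u, ← hst2]; group
      show h2 * u * k2⁻¹ * x ∈ _ ∩ _
      constructor
      · have heq : h2 * u * k2⁻¹ * x = h2 * c * k1 := by rw [← hst'2]; group
        rw [heq]; exact mul_mem (mul_mem hh2 hc) hk1
      · refine ⟨h1⁻¹ * a⁻¹ * k2⁻¹,
          mul_mem (mul_mem (inv_mem hh1) (inv_mem ha)) (inv_mem hk2), ?_⟩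
        show x⁻¹ * (h1⁻¹ * a⁻¹ * k2⁻¹) * x = h2 * u * k2⁻¹ * x
        rw [hu]; group
    · rintro ⟨hw1, e, he, hw2⟩
      have hw2' : x⁻¹ * e * x = w := hw2
      refine ⟨h2⁻¹ * w * x⁻¹ * k2, ⟨?_, ?_⟩, ?_⟩
      · rw [Set.mem_inv]
        refine ⟨k2⁻¹ * e⁻¹ * h1⁻¹,
          mul_mem (mul_mem (inv_mem hk2) (inv_mem he)) (inv_mem hh1),
          h1 * x * h2, rfl, ?_⟩
        show k2⁻¹ * e⁻¹ * h1⁻¹ * (h1 * x * h2) = (h2⁻¹ * w * x⁻¹ * k2)⁻¹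
        rw [← hw2']; group
      · refine ⟨h2⁻¹ * w * k1⁻¹, mul_mem (mul_mem (inv_mem hh2) hw1) (inv_mem hk1),
          k1 * x⁻¹ * k2, rfl, ?_⟩
        show h2⁻¹ * w * k1⁻¹ * (k1 * x⁻¹ * k2) = h2⁻¹ * w * x⁻¹ * k2
        group
      · show h2 * (h2⁻¹ * w * x⁻¹ * k2) * k2⁻¹ * x = w
        group
  calc A.ncard = ((fun u : G => h2 * u * k2⁻¹ * x) '' A).ncard :=
        (Set.ncard_image_of_injective A hinj).symm
    _ = _ := by rw [key]
end

section
/- Let G be a finite group, H a subgroup, and x ∈ G \ H with HxH ≠ Hx⁻¹H. Then there exist |H| pairwise disjoint subsets of HxH ∪ Hx⁻¹H, each of which is an inverse-closed right transversal of H in HxH ∪ Hx⁻¹H. -/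
open scoped Pointwise

section Aux
variable {G : Type*} [Group G] (H : Subgroup G)

/-- The subgroup of `H` of elements `h` with `y * h * y⁻¹ ∈ H`. -/
def Km (y : G) : Subgroup ↥H where
  carrier := {h : ↥H | y * (h : G) * y⁻¹ ∈ H}
  one_mem' := by simpa using H.one_mem
  mul_mem' := by
    intro a b ha hb
    have h1 : y * ((a*b : ↥H) : G) * y⁻¹ = (y * (a:G) * y⁻¹) * (y * (b:G) * y⁻¹) := by
      push_cast; group
    show y * ((a*b : ↥H) : G) * y⁻¹ ∈ H
    rw [h1]; exact H.mul_mem ha hb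
  inv_mem' := by
    intro a ha
    have h1 : y * ((a⁻¹ : ↥H) : G) * y⁻¹ = (y * (a:G) * y⁻¹)⁻¹ := by
      push_cast; group
    show y * ((a⁻¹ : ↥H) : G) * y⁻¹ ∈ H
    rw [h1]; exact H.inv_mem ha

lemma mem_Km (y : G) (h : ↥H) : h ∈ Km H y ↔ y * (h : G) * y⁻¹ ∈ H := Iff.rfl

lemma quot_eq (y : G) (c d : ↥H) :
    (c : ↥H ⧸ Km H y) = (d : ↥H ⧸ Km H y) ↔ y * ((c:G)⁻¹ * (d:G)) * y⁻¹ ∈ H := by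
  rw [QuotientGroup.eq, mem_Km]
  push_cast
  rw [mul_assoc]

/-- conjugation equivalence between the two kernels -/
noncomputable def KmEquiv (x : G) : ↥(Km H x) ≃ ↥(Km H x⁻¹) where
  toFun a := ⟨⟨x * (a.1 : G) * x⁻¹, a.2⟩, by
    have : x⁻¹ * (x * (a.1 : G) * x⁻¹) * x⁻¹⁻¹ = (a.1 : G) := by group
    show x⁻¹ * (x * (a.1 : G) * x⁻¹) * x⁻¹⁻¹ ∈ H
    rw [this]; exact a.1.2⟩
  invFun a := ⟨⟨x⁻¹ * (a.1 : G) * x, by simpa using (mem_Km H x⁻¹ a.1).1 a.2⟩, by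
    show x * (x⁻¹ * (a.1 : G) * x) * x⁻¹ ∈ H
    have : x * (x⁻¹ * (a.1 : G) * x) * x⁻¹ = (a.1 : G) := by group
    rw [this]; exact a.1.2⟩
  left_inv a := by ext; show x⁻¹ * (x * (a.1 : G) * x⁻¹) * x = (a.1 : G); group
  right_inv a := by ext; show x * (x⁻¹ * (a.1 : G) * x) * x⁻¹ = (a.1 : G); group

lemma memD (y : G) (g : G) :
    g ∈ (H : Set G) * {y} * (H : Set G) ↔ ∃ a b : ↥H, g = (a : G) * y * (b : G)⁻¹ := by
  simp only [Set.mem_mul, Set.mem_singleton_iff, SetLike.mem_coe]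
  constructor
  · rintro ⟨u, ⟨p, hp, y', rfl, rfl⟩, v, hv, rfl⟩
    exact ⟨⟨p, hp⟩, ⟨v⁻¹, H.inv_mem hv⟩, by push_cast; group⟩
  · rintro ⟨a, b, rfl⟩
    exact ⟨(a:G) * y, ⟨a, a.2, y, rfl, rfl⟩, (b:G)⁻¹, H.inv_mem b.2, rfl⟩

lemma dcoset_sub (y z : G) (a b c d : ↥H)
    (hEq : (a : G) * y * (b : G)⁻¹ = (c : G) * z * (d : G)⁻¹) :
    (H : Set G) * {y} * (H : Set G) ⊆ (H : Set G) * {z} * (H : Set G) := by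
  intro g hg
  obtain ⟨p, q, rfl⟩ := (memD H y g).1 hg
  refine (memD H z _).2 ⟨p * a⁻¹ * c, q * b⁻¹ * d, ?_⟩
  have hz : (c : G)⁻¹ * ((a : G) * y * (b : G)⁻¹) * (d : G) = z := by rw [hEq]; group
  rw [← hz]; push_cast; group

lemma key (y : G) (a b c d : ↥H) :
    ((a:G) * y * (b:G)⁻¹) * (((c:G) * y * (d:G)⁻¹))⁻¹ ∈ H ↔ y * ((b:G)⁻¹ * (d:G)) * y⁻¹ ∈ H := by
  have h1 : ((a:G) * y * (b:G)⁻¹) * (((c:G) * y * (d:G)⁻¹))⁻¹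
      = (a:G) * (y * ((b:G)⁻¹ * (d:G)) * y⁻¹) * (c:G)⁻¹ := by group
  rw [h1, Subgroup.mul_mem_cancel_right H (H.inv_mem c.2), Subgroup.mul_mem_cancel_left H a.2]

end Aux

/-- T is a right transversal of H in A: T ⊆ A and T meets the right coset of
each element of A exactly once. -/
def IsRightTransversalOn {G : Type*} [Group G] (H : Subgroup G) (T A : Set G) : Prop :=
  T ⊆ A ∧ ∀ g ∈ A, ∃! t, t ∈ T ∧ t * g⁻¹ ∈ H

theorem stmt4 {G : Type*} [Group G] [Fintype G] (H : Subgroup G) (x : G)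
    (hx : x ∉ H)
    (hne : (H : Set G) * {x} * (H : Set G) ≠ (H : Set G) * {x⁻¹} * (H : Set G)) :
    ∃ T : Fin (Nat.card H) → Set G,
      (∀ i, IsRightTransversalOn H (T i)
          ((H : Set G) * {x} * (H : Set G) ∪ (H : Set G) * {x⁻¹} * (H : Set G))
        ∧ (T i)⁻¹ = T i) ∧
      Pairwise fun i j => Disjoint (T i) (T j) := by
  classical
  have hdisj : ∀ g, g ∈ (H : Set G) * {x} * (H : Set G) →
      g ∈ (H : Set G) * {x⁻¹} * (H : Set G) → False := by
    intro g hg1 hg2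
    obtain ⟨a, b, rfl⟩ := (memD H x g).1 hg1
    obtain ⟨c, d, hEq⟩ := (memD H x⁻¹ _).1 hg2
    exact hne (Set.Subset.antisymm (dcoset_sub H x x⁻¹ a b c d hEq)
      (dcoset_sub H x⁻¹ x c d a b hEq.symm))
  haveI : Finite (↥H ⧸ Km H x) := Quotient.finite _
  haveI : Finite (↥H ⧸ Km H x⁻¹) := Quotient.finite _
  have hQcard : Nat.card (↥H ⧸ Km H x) = Nat.card (↥H ⧸ Km H x⁻¹) := by
    have l1 := Subgroup.card_eq_card_quotient_mul_card_subgroup (Km H x)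
    have l2 := Subgroup.card_eq_card_quotient_mul_card_subgroup (Km H x⁻¹)
    have hk : Nat.card ↥(Km H x) = Nat.card ↥(Km H x⁻¹) := Nat.card_congr (KmEquiv H x)
    have hpos : 0 < Nat.card ↥(Km H x⁻¹) := Nat.card_pos
    apply Nat.eq_of_mul_eq_mul_right hpos
    calc Nat.card (↥H ⧸ Km H x) * Nat.card ↥(Km H x⁻¹)
        = Nat.card (↥H ⧸ Km H x) * Nat.card ↥(Km H x) := by rw [hk]
      _ = Nat.card ↥H := l1.symm
      _ = _ := l2
  let σ : (↥H ⧸ Km H x) ≃ (↥H ⧸ Km H x⁻¹) :=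
    (Finite.equivFin _).trans ((finCongr hQcard).trans (Finite.equivFin _).symm)
  let e : ↥H → (↥H ⧸ Km H x) → G :=
    fun h q => ((h * Quotient.out (σ q) : ↥H) : G) * x * ((Quotient.out q : ↥H) : G)⁻¹
  have he : ∀ h q, e h q
      = ((h * Quotient.out (σ q) : ↥H) : G) * x * ((Quotient.out q : ↥H) : G)⁻¹ :=
    fun _ _ => rfl
  have hinv_e : ∀ h q, (e h q)⁻¹
      = ((Quotient.out q : ↥H) : G) * x⁻¹ * ((h * Quotient.out (σ q) : ↥H) : G)⁻¹ := by
    intro h q; rw [he]; group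
  have memPform : ∀ (a b : ↥H), ((a:G) * x * (b:G)⁻¹) ∈ (H : Set G) * {x} * (H : Set G) :=
    fun a b => (memD H x _).2 ⟨a, b, rfl⟩
  have memMform : ∀ (a b : ↥H), ((a:G) * x⁻¹ * (b:G)⁻¹) ∈ (H : Set G) * {x⁻¹} * (H : Set G) :=
    fun a b => (memD H x⁻¹ _).2 ⟨a, b, rfl⟩
  have hq1 : ∀ (q : ↥H ⧸ Km H x) (b : ↥H),
      x * (((Quotient.out q : ↥H) : G)⁻¹ * (b : G)) * x⁻¹ ∈ H ↔ q = (b : ↥H ⧸ Km H x) := by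
    intro q b
    constructor
    · intro hmem
      rw [← QuotientGroup.out_eq' q]
      exact (quot_eq H x _ _).2 hmem
    · intro hq
      apply (quot_eq H x (Quotient.out q) b).1
      rw [QuotientGroup.out_eq' q, hq]
  let Tf : ↥H → Set G := fun h => Set.range (e h) ∪ (Set.range (e h))⁻¹
  have hrangeP : ∀ (h₀ : ↥H) t, t ∈ Set.range (e h₀) → t ∈ (H : Set G) * {x} * (H : Set G) := by
    rintro h₀ t ⟨q, rfl⟩; rw [he]; exact memPform _ _
  have hrangeM : ∀ (h₀ : ↥H) t, t ∈ (Set.range (e h₀))⁻¹ →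
      t ∈ (H : Set G) * {x⁻¹} * (H : Set G) := by
    intro h₀ t ht; rw [Set.mem_inv] at ht; obtain ⟨q, hq⟩ := ht
    have h1 : t = (e h₀ q)⁻¹ := by rw [hq, inv_inv]
    rw [h1, hinv_e]; exact memMform _ _
  have hmain : ∀ h : ↥H, IsRightTransversalOn H (Tf h)
      ((H : Set G) * {x} * (H : Set G) ∪ (H : Set G) * {x⁻¹} * (H : Set G))
      ∧ (Tf h)⁻¹ = Tf h := by
    intro h
    refine ⟨⟨?_, ?_⟩, ?_⟩
    · -- subset
      rintro t (ht | ht)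
      · exact Or.inl (hrangeP h t ht)
      · exact Or.inr (hrangeM h t ht)
    · -- transversal
      rintro g (hg | hg)
      · obtain ⟨a, b, rfl⟩ := (memD H x g).1 hg
        refine ⟨e h (↑b), ⟨Set.mem_union_left _ ⟨_, rfl⟩, ?_⟩, ?_⟩
        · rw [he]
          exact (key H x _ _ a b).2 ((hq1 (↑b) b).2 rfl)
        · rintro t' ⟨(ht' | ht'), hH⟩
          · obtain ⟨q, rfl⟩ := ht'
            have hq : q = (↑b : ↥H ⧸ Km H x) := by
              apply (hq1 q b).1
              exact (key H x _ _ a b).1 (by rw [he] at hH; exact hH)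
            rw [hq]
          · exfalso
            exact hdisj t'
              ((memD H x t').2 ⟨⟨t' * ((a:G) * x * (b:G)⁻¹)⁻¹, hH⟩ * a, b, by push_cast; group⟩)
              (hrangeM h t' ht')
      · obtain ⟨a, b, rfl⟩ := (memD H x⁻¹ g).1 hg
        refine ⟨(e h (σ.symm ↑(h⁻¹ * b)))⁻¹, ⟨Set.mem_union_right _ ?_, ?_⟩, ?_⟩
        · rw [Set.mem_inv, inv_inv]; exact ⟨_, rfl⟩
        · rw [hinv_e]
          apply (key H x⁻¹ (Quotient.out (σ.symm ↑(h⁻¹ * b)))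
            (h * Quotient.out (σ (σ.symm ↑(h⁻¹ * b)))) a b).2
          have h2 : ((Quotient.out (σ (σ.symm (↑(h⁻¹ * b)))) : ↥H) : ↥H ⧸ Km H x⁻¹)
              = ((h⁻¹ * b : ↥H) : ↥H ⧸ Km H x⁻¹) := by
            rw [QuotientGroup.out_eq', Equiv.apply_symm_apply]
          have h3 := (quot_eq H x⁻¹ _ _).1 h2
          have h4 : x⁻¹ * (((h * Quotient.out (σ (σ.symm ↑(h⁻¹ * b))) : ↥H) : G)⁻¹ * (b:G)) * x⁻¹⁻¹
              = x⁻¹ * (((Quotient.out (σ (σ.symm ↑(h⁻¹ * b))) : ↥H) : G)⁻¹ * ((h⁻¹ * b : ↥H) : G))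
                * x⁻¹⁻¹ := by
            push_cast; group
          rw [h4]; exact h3
        · rintro t' ⟨(ht' | ht'), hH⟩
          · exfalso
            obtain ⟨q, rfl⟩ := ht'
            exact hdisj (e h q) (hrangeP h _ ⟨q, rfl⟩)
              ((memD H x⁻¹ _).2 ⟨⟨e h q * ((a:G) * x⁻¹ * (b:G)⁻¹)⁻¹, hH⟩ * a, b, by push_cast; group⟩)
          · rw [Set.mem_inv] at ht'
            obtain ⟨q, hq⟩ := ht'
            have ht'eq : t' = (e h q)⁻¹ := by rw [hq, inv_inv]
            rw [ht'eq, hinv_e] at hH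
            have h5 := (key H x⁻¹ _ _ a b).1 hH
            have h6 : x⁻¹ * (((h * Quotient.out (σ q) : ↥H) : G)⁻¹ * (b:G)) * x⁻¹⁻¹
                = x⁻¹ * (((Quotient.out (σ q) : ↥H) : G)⁻¹ * ((h⁻¹ * b : ↥H) : G)) * x⁻¹⁻¹ := by
              push_cast; group
            rw [h6] at h5
            have h7 : ((Quotient.out (σ q) : ↥H) : ↥H ⧸ Km H x⁻¹) = ↑(h⁻¹ * b) :=
              (quot_eq H x⁻¹ _ _).2 h5
            have h8 : σ q = ((h⁻¹ * b : ↥H) : ↥H ⧸ Km H x⁻¹) :=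
              (QuotientGroup.out_eq' (σ q)).symm.trans h7
            have h9 : q = σ.symm ↑(h⁻¹ * b) := by rw [← h8, Equiv.symm_apply_apply]
            rw [ht'eq, h9]
    · -- inverse closed
      show (Set.range (e h) ∪ (Set.range (e h))⁻¹)⁻¹ = Set.range (e h) ∪ (Set.range (e h))⁻¹
      ext t
      simp only [Set.mem_inv, Set.mem_union, inv_inv]
      tauto
  have hr : ∀ (h₁ h₂ : ↥H) (q₁ q₂), e h₁ q₁ = e h₂ q₂ → h₁ = h₂ := by
    intro h₁ h₂ q₁ q₂ heq
    have hmem : e h₁ q₁ * (e h₂ q₂)⁻¹ ∈ H := by rw [heq]; simpa using H.one_mem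
    rw [he, he] at hmem
    have hk := (key H x _ _ _ _).1 hmem
    have hq : q₁ = q₂ := by
      have h5 := (quot_eq H x _ _).2 hk
      rw [QuotientGroup.out_eq', QuotientGroup.out_eq'] at h5; exact h5
    rw [hq] at heq
    rw [he, he] at heq
    have c1 := mul_right_cancel heq
    have c2 := mul_right_cancel c1
    have c3 : h₁ * Quotient.out (σ q₂) = h₂ * Quotient.out (σ q₂) := Subtype.coe_injective c2
    exact mul_right_cancel c3
  have hdisjT : ∀ h h' : ↥H, h ≠ h' → ∀ t, t ∈ Tf h → t ∈ Tf h' → False := by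
    intro h h' hne' t ht ht'
    rcases ht with ht | ht <;> rcases ht' with ht' | ht'
    · obtain ⟨q, hq⟩ := ht; obtain ⟨q', hq'⟩ := ht'
      exact hne' (hr h h' q q' (hq.trans hq'.symm))
    · exact hdisj t (hrangeP h t ht) (hrangeM h' t ht')
    · exact hdisj t (hrangeP h' t ht') (hrangeM h t ht)
    · rw [Set.mem_inv] at ht ht'
      obtain ⟨q, hq⟩ := ht; obtain ⟨q', hq'⟩ := ht'
      exact hne' (hr h h' q q' (hq.trans hq'.symm))
  refine ⟨fun i => Tf ((Finite.equivFin ↥H).symm i), fun i => hmain _, ?_⟩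
  intro i j hij
  rw [Set.disjoint_left]
  intro t ht ht'
  exact hdisjT _ _ (fun hEq => hij ((Finite.equivFin ↥H).symm.injective hEq)) t ht ht'
end

section
/- Let G be a finite group, H a subgroup, and x ∈ G \ H with HxH = Hx⁻¹H and |H|/|H ∩ H^x| even. Then there exist |H| − |H ∩ H^x| pairwise disjoint subsets of HxH, each of which is an inverse-closed right transversal of H in HxH. -/
open scoped Pointwise

private def sig (m : ℕ) (s : ZMod m) : Option (ZMod m) → Option (ZMod m)
  | none => some s
  | some i => if i = s then none else some (s + s - i)

private lemma zmod_two_eq_zero {m : ℕ} (hm : Odd m) {a : ZMod m} (ha : a + a = 0) : a = 0 := by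
  obtain ⟨t, ht⟩ := hm
  have h2 : (t : ZMod m) + t + 1 = 0 := by
    have h1 : ((m : ℕ) : ZMod m) = 0 := ZMod.natCast_self m
    have h3 : ((m : ℕ) : ZMod m) = ((2 * t + 1 : ℕ) : ZMod m) := by rw [ht]
    push_cast at h3
    rw [h1] at h3
    linear_combination -h3
  linear_combination ((t : ZMod m) + 1) * ha - a * h2

private lemma sig_invol (m : ℕ) (s : ZMod m) : Function.Involutive (sig m s) := by
  intro c
  match c with
  | none => simp [sig]
  | some i =>
    by_cases h : i = s
    · simp [sig, h]
    · have h2 : s + s - i ≠ s := fun hc => h (by linear_combination -hc)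
      simp only [sig, if_neg h, if_neg h2]
      congr 1
      ring

private lemma sig_ne_self {m : ℕ} (hm : Odd m) (s : ZMod m) (c : Option (ZMod m)) :
    sig m s c ≠ c := by
  match c with
  | none => simp [sig]
  | some i =>
    by_cases h : i = s
    · simp [sig, h]
    · simp only [sig, if_neg h, ne_eq, Option.some.injEq]
      intro hc
      have := zmod_two_eq_zero hm (a := s - i) (by linear_combination hc)
      exact h (by linear_combination -this)

private lemma sig_ne {m : ℕ} (hm : Odd m) {s s' : ZMod m} (hss : s ≠ s') (c : Option (ZMod m)) :
    sig m s c ≠ sig m s' c := by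
  match c with
  | none => simpa [sig] using hss
  | some i =>
    by_cases h : i = s <;> by_cases h' : i = s'
    · exact absurd (h ▸ h') hss
    · simp [sig, h, if_neg h', if_neg hss]
    · simp only [sig, if_pos h', if_neg h]
      exact Option.some_ne_none _
    · simp only [sig, if_neg h, if_neg h', ne_eq, Option.some.injEq]
      intro hc
      have := zmod_two_eq_zero hm (a := s - s') (by linear_combination hc)
      exact hss (by linear_combination this)

theorem stmt5 {G : Type*} [Group G] [Fintype G] (H : Subgroup G) (x : G)
    (hx : x ∉ H)
    (heq : (H : Set G) * {x} * (H : Set G) = (H : Set G) * {x⁻¹} * (H : Set G))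
    (heven : Even (Nat.card H /
      ((H : Set G) ∩ ((fun g => x⁻¹ * g * x) '' (H : Set G))).ncard)) :
    ∃ T : Fin (Nat.card H -
        ((H : Set G) ∩ ((fun g => x⁻¹ * g * x) '' (H : Set G))).ncard) → Set G,
      (∀ i, IsRightTransversalOn H (T i) ((H : Set G) * {x} * (H : Set G))
        ∧ (T i)⁻¹ = T i) ∧
      Pairwise fun i j => Disjoint (T i) (T j) := by
  classical
  -- the subgroup K = H ∩ H^x
  set Ksub : Subgroup G := H ⊓ Subgroup.map (MulAut.conj x⁻¹).toMonoidHom H with hKsub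
  have memKsub : ∀ g : G, g ∈ Ksub ↔ g ∈ H ∧ x * g * x⁻¹ ∈ H := by
    intro g
    rw [hKsub, Subgroup.mem_inf, Subgroup.mem_map]
    constructor
    · rintro ⟨hg, u, hu, rfl⟩
      refine ⟨hg, ?_⟩
      have : x * ((MulAut.conj x⁻¹).toMonoidHom u) * x⁻¹ = u := by
        simp [MulAut.conj_apply]
        group
      rwa [this]
    · rintro ⟨hg, hg2⟩
      refine ⟨hg, x * g * x⁻¹, hg2, ?_⟩
      simp [MulAut.conj_apply]
      group
  have hKset : (H : Set G) ∩ ((fun g => x⁻¹ * g * x) '' (H : Set G)) = (Ksub : Set G) := by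
    ext g
    simp only [Set.mem_inter_iff, Set.mem_image, SetLike.mem_coe, memKsub]
    constructor
    · rintro ⟨hg, u, hu, rfl⟩
      refine ⟨hg, ?_⟩
      have : x * (x⁻¹ * u * x) * x⁻¹ = u := by group
      rwa [this]
    · rintro ⟨hg, hg2⟩
      refine ⟨hg, x * g * x⁻¹, hg2, by group⟩
  have hd : ((H : Set G) ∩ ((fun g => x⁻¹ * g * x) '' (H : Set G))).ncard = Nat.card Ksub := by
    rw [hKset, ← Nat.card_coe_set_eq]
    rfl
  rw [hd] at heven ⊢
  set d := Nat.card Ksub with hdef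
  -- the double coset A = H x H
  set A : Set G := (H : Set G) * {x} * (H : Set G) with hA
  have memA : ∀ g : G, g ∈ A ↔ ∃ a ∈ H, ∃ b ∈ H, g = a * x * b := by
    intro g
    rw [hA]
    simp only [Set.mem_mul, Set.mem_singleton_iff, SetLike.mem_coe]
    constructor
    · rintro ⟨p, ⟨a, ha, xx, rfl, rfl⟩, b, hb, rfl⟩
      exact ⟨a, ha, b, hb, rfl⟩
    · rintro ⟨a, ha, b, hb, rfl⟩
      exact ⟨a * x, ⟨a, ha, x, rfl, rfl⟩, b, hb, rfl⟩
  have memA' : ∀ g : G, g ∈ A ↔ ∃ a ∈ H, ∃ b ∈ H, g = a * x⁻¹ * b := by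
    intro g
    rw [heq]
    simp only [Set.mem_mul, Set.mem_singleton_iff, SetLike.mem_coe]
    constructor
    · rintro ⟨p, ⟨a, ha, xx, rfl, rfl⟩, b, hb, rfl⟩
      exact ⟨a, ha, b, hb, rfl⟩
    · rintro ⟨a, ha, b, hb, rfl⟩
      exact ⟨a * x⁻¹, ⟨a, ha, x⁻¹, rfl, rfl⟩, b, hb, rfl⟩
  have hxinvA : x⁻¹ ∈ A := (memA' x⁻¹).2 ⟨1, one_mem _, 1, one_mem _, by group⟩
  have hAinv : ∀ g ∈ A, g⁻¹ ∈ A := by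
    intro g hg
    obtain ⟨a, ha, b, hb, rfl⟩ := (memA' g).1 hg
    exact (memA _).2 ⟨b⁻¹, inv_mem hb, a⁻¹, inv_mem ha, by group⟩
  -- the quotient by right cosets
  set q : G → Quotient (QuotientGroup.rightRel H) := Quotient.mk'' with hqdef
  have hq : ∀ a b : G, q a = q b ↔ a * b⁻¹ ∈ H := by
    intro a b
    rw [hqdef]
    rw [Quotient.eq'', QuotientGroup.rightRel_apply]
    constructor
    · intro h
      have := H.inv_mem h
      simpa using this
    · intro h
      have := H.inv_mem h
      simpa using this
  set D : Set (Quotient (QuotientGroup.rightRel H)) := q '' A with hD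
  -- base points for each pair of cosets
  have hbase : ∀ c c' : D, ∃ h1 h2 : G, h1 ∈ H ∧ h2 ∈ H ∧
      q (h1 * x * h2) = (c : Quotient (QuotientGroup.rightRel H)) ∧
      q ((h1 * x * h2)⁻¹) = (c' : Quotient (QuotientGroup.rightRel H)) := by
    rintro ⟨c, g1, hg1A, rfl⟩ ⟨c', g2, hg2A, rfl⟩
    obtain ⟨a1, ha1, e1, he1, rfl⟩ := (memA g1).1 hg1A
    obtain ⟨a2, ha2, e2, he2, rfl⟩ := (memA g2).1 hg2A
    obtain ⟨u, hu, v, hv, huv⟩ := (memA x⁻¹).1 hxinvA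
    refine ⟨e2⁻¹ * u, e1, H.mul_mem (H.inv_mem he2) hu, he1, ?_, ?_⟩
    · rw [hq]
      have hxx : e2⁻¹ * u * x * e1 * (a1 * x * e1)⁻¹ = e2⁻¹ * u * a1⁻¹ := by group
      rw [hxx]
      exact H.mul_mem (H.mul_mem (H.inv_mem he2) hu) (H.inv_mem ha1)
    · rw [hq]
      -- x⁻¹ = u * x * v so x⁻¹ * u⁻¹ = v * x
      have hxu : x⁻¹ * u⁻¹ = v * x := by
        have h0 : (u * x * v)⁻¹ = x := by rw [← huv]; group
        calc x⁻¹ * u⁻¹ = v * (u * x * v)⁻¹ := by group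
        _ = v * x := by rw [h0]
      have hxx : (e2⁻¹ * u * x * e1)⁻¹ * (a2 * x * e2)⁻¹ =
          e1⁻¹ * (x⁻¹ * u⁻¹) * x⁻¹ * a2⁻¹ := by group
      rw [hxx, hxu]
      have hxx2 : e1⁻¹ * (v * x) * x⁻¹ * a2⁻¹ = e1⁻¹ * v * a2⁻¹ := by group
      rw [hxx2]
      exact H.mul_mem (H.mul_mem (H.inv_mem he1) hv) (H.inv_mem ha2)
  choose b1 b2 hb1 hb2 hqc hqc' using hbase
  -- the canonical injections from Ksub into the pieces E(c,c')
  set e : D → D → Ksub → G := fun c c' k => b1 c c' * x * (k : G) * b2 c c' with hedef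
  have hkH : ∀ k : Ksub, (k : G) ∈ H := fun k => ((memKsub _).1 k.2).1
  have hkX : ∀ k : Ksub, x * (k : G) * x⁻¹ ∈ H := fun k => ((memKsub _).1 k.2).2
  have he_mem : ∀ (c c' : D) (k : Ksub), e c c' k ∈ A := by
    intro c c' k
    exact (memA _).2 ⟨b1 c c', hb1 c c', (k : G) * b2 c c',
      H.mul_mem (hkH k) (hb2 c c'), by rw [hedef]; group⟩
  have he_q : ∀ (c c' : D) (k : Ksub), q (e c c' k) = (c : Quotient (QuotientGroup.rightRel H)) := by
    intro c c' k
    rw [← hqc c c', hedef, hq]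
    have hxx : b1 c c' * x * (k : G) * b2 c c' * (b1 c c' * x * b2 c c')⁻¹ =
        b1 c c' * (x * (k : G) * x⁻¹) * (b1 c c')⁻¹ := by group
    rw [hxx]
    exact H.mul_mem (H.mul_mem (hb1 c c') (hkX k)) (H.inv_mem (hb1 c c'))
  have he_q' : ∀ (c c' : D) (k : Ksub),
      q ((e c c' k)⁻¹) = (c' : Quotient (QuotientGroup.rightRel H)) := by
    intro c c' k
    rw [← hqc' c c', hedef, hq]
    have hxx : (b1 c c' * x * (k : G) * b2 c c')⁻¹ * ((b1 c c' * x * b2 c c')⁻¹)⁻¹ =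
        (b2 c c')⁻¹ * (k : G)⁻¹ * b2 c c' := by group
    rw [hxx]
    exact H.mul_mem (H.mul_mem (H.inv_mem (hb2 c c')) (H.inv_mem (hkH k))) (hb2 c c')
  have he_inj : ∀ c c' : D, Function.Injective (e c c') := by
    intro c c' k k' hkk
    rw [hedef] at hkk
    simp only [] at hkk
    refine Subtype.ext ?_
    calc (k : G) = (b1 c c' * x)⁻¹ * (b1 c c' * x * (k : G) * b2 c c') * (b2 c c')⁻¹ := by group
    _ = (b1 c c' * x)⁻¹ * (b1 c c' * x * (k' : G) * b2 c c') * (b2 c c')⁻¹ := by rw [hkk]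
    _ = (k' : G) := by group
  -- an arbitrary numbering of D, used to orient pairs
  haveI : Fintype D := Fintype.ofFinite _
  set num : D → ℕ := fun c => (Fintype.equivFin D c : ℕ) with hnumdef
  have hnuminj : Function.Injective num := by
    intro a b h
    exact (Fintype.equivFin D).injective (Fin.ext h)
  set f : D → D → Ksub → G := fun c c' k =>
    if num c < num c' then e c c' k else (e c' c k)⁻¹ with hfdef
  have hf_mem : ∀ (c c' : D) (k : Ksub), f c c' k ∈ A := by
    intro c c' k
    simp only [hfdef]
    by_cases hlt : num c < num c'
    · rw [if_pos hlt]; exact he_mem c c' k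
    · rw [if_neg hlt]; exact hAinv _ (he_mem c' c k)
  have hf_q : ∀ (c c' : D) (k : Ksub),
      q (f c c' k) = (c : Quotient (QuotientGroup.rightRel H)) := by
    intro c c' k
    simp only [hfdef]
    by_cases hlt : num c < num c'
    · rw [if_pos hlt]; exact he_q c c' k
    · rw [if_neg hlt]; exact he_q' c' c k
  have hf_q' : ∀ (c c' : D) (k : Ksub),
      q ((f c c' k)⁻¹) = (c' : Quotient (QuotientGroup.rightRel H)) := by
    intro c c' k
    simp only [hfdef]
    by_cases hlt : num c < num c'
    · rw [if_pos hlt]; exact he_q' c c' k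
    · rw [if_neg hlt, inv_inv]; exact he_q c' c k
  have hf_inj : ∀ c c' : D, Function.Injective (f c c') := by
    intro c c' k k' hkk
    simp only [hfdef] at hkk
    by_cases hlt : num c < num c'
    · rw [if_pos hlt, if_pos hlt] at hkk; exact he_inj c c' hkk
    · rw [if_neg hlt, if_neg hlt] at hkk; exact he_inj c' c (inv_injective hkk)
  have hf_inv : ∀ (c c' : D) (_ : c ≠ c') (k : Ksub), (f c c' k)⁻¹ = f c' c k := by
    intro c c' hne k
    have hnumne : num c ≠ num c' := fun h => hne (hnuminj h)
    simp only [hfdef]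
    by_cases hlt : num c < num c'
    · have hlt' : ¬ num c' < num c := by omega
      simp only [if_pos hlt, if_neg hlt']
    · have hlt' : num c' < num c := by omega
      simp only [if_neg hlt, if_pos hlt', inv_inv]
  -- cardinality of D
  have hKle : Ksub ≤ H := inf_le_left
  set K' : Subgroup H := Ksub.subgroupOf H with hK'def
  have hcardK' : Nat.card K' = d := by
    rw [hdef]
    exact Nat.card_congr (Subgroup.subgroupOfEquivOfLe hKle).toEquiv
  set n : ℕ := K'.index with hndef
  have hHd : d * n = Nat.card H := by
    rw [← hcardK', hndef]
    exact Subgroup.card_mul_index K'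
  have hdpos : 0 < d := by rw [hdef]; exact Nat.card_pos
  have hHpos : 0 < Nat.card H := Nat.card_pos
  have hnpos : 0 < n := by
    rcases Nat.eq_zero_or_pos n with h | h
    · rw [h, mul_zero] at hHd; omega
    · exact h
  have hn : Nat.card H / d = n := by
    rw [← hHd, Nat.mul_div_cancel_left _ hdpos]
  rw [hn] at heven
  obtain ⟨w, hw⟩ := heven
  have hn2 : 2 ≤ n := by omega
  -- the map from the right coset space of K' in H onto D
  have hmemxh : ∀ h : H, x * (h : G) ∈ A :=
    fun h => (memA _).2 ⟨1, one_mem _, (h : G), h.2, by group⟩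
  set β : Quotient (QuotientGroup.rightRel K') → D :=
    Quotient.lift (fun h : H => (⟨q (x * (h : G)), ⟨x * (h : G), hmemxh h, rfl⟩⟩ : D))
      (by
        intro a b hab
        have hab1 := QuotientGroup.rightRel_apply.mp hab
        rw [hK'def, Subgroup.mem_subgroupOf] at hab1
        have hab2 : ((a : G) * (b : G)⁻¹) ∈ Ksub := by
          have := Ksub.inv_mem hab1
          simpa using this
        refine Subtype.ext ?_
        rw [hq]
        have hxx : x * (a : G) * (x * (b : G))⁻¹ = x * ((a : G) * (b : G)⁻¹) * x⁻¹ := by group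
        rw [hxx]
        exact ((memKsub _).1 hab2).2) with hbdef
  have hbsurj : Function.Surjective β := by
    rintro ⟨c, g, hgA, rfl⟩
    obtain ⟨a, ha, b, hb, rfl⟩ := (memA g).1 hgA
    refine ⟨Quotient.mk'' ⟨b, hb⟩, ?_⟩
    refine Subtype.ext ?_
    show q (x * b) = q (a * x * b)
    rw [hq]
    have hxx : x * b * (a * x * b)⁻¹ = a⁻¹ := by group
    rw [hxx]
    exact H.inv_mem ha
  have hbinj : Function.Injective β := by
    intro p p' hab
    obtain ⟨a, rfl⟩ := Quotient.exists_rep p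
    obtain ⟨b, rfl⟩ := Quotient.exists_rep p'
    have hab2 : q (x * (a : G)) = q (x * (b : G)) := congrArg Subtype.val hab
    rw [hq] at hab2
    refine Quotient.sound (QuotientGroup.rightRel_apply.mpr ?_)
    rw [hK'def, Subgroup.mem_subgroupOf]
    have hmm : (x * (a : G) * (x * (b : G))⁻¹)⁻¹ ∈ H := H.inv_mem hab2
    have hxx : (x * (a : G) * (x * (b : G))⁻¹)⁻¹ = x * ((b : G) * (a : G)⁻¹) * x⁻¹ := by group
    rw [hxx] at hmm
    refine (memKsub _).2 ⟨?_, hmm⟩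
    · push_cast
      exact H.mul_mem b.2 (H.inv_mem a.2)
  have hDcard : Nat.card D = n := by
    rw [← Nat.card_congr (Equiv.ofBijective β ⟨hbinj, hbsurj⟩),
      Nat.card_congr (QuotientGroup.quotientRightRelEquivQuotientLeftRel K'), hndef,
      Subgroup.index_eq_card]
  -- the family of fixed-point-free involutions on D
  set m : ℕ := n - 1 with hmdef
  have hmodd : Odd m := ⟨w - 1, by omega⟩
  haveI : NeZero m := ⟨by omega⟩
  have hcardV : Nat.card (Option (ZMod m)) = Nat.card D := by
    rw [hDcard, Nat.card_eq_fintype_card, Fintype.card_option, ZMod.card]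
    omega
  obtain ⟨eV⟩ := Finite.card_eq.mp hcardV
  set tau : ZMod m → D → D := fun s c => eV (sig m s (eV.symm c)) with htaudef
  have htau_invol : ∀ s c, tau s (tau s c) = c := by
    intro s c
    simp only [htaudef, Equiv.symm_apply_apply]
    rw [sig_invol m s (eV.symm c), Equiv.apply_symm_apply]
  have htau_ne : ∀ s c, tau s c ≠ c := by
    intro s c h
    simp only [htaudef] at h
    exact sig_ne_self hmodd s (eV.symm c)
      (by rw [← Equiv.symm_apply_apply eV (sig m s (eV.symm c)), h])
  have htau_ss : ∀ (s s' : ZMod m) (c : D), s ≠ s' → tau s c ≠ tau s' c := by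
    intro s s' c hss h
    simp only [htaudef] at h
    exact sig_ne hmodd hss (eV.symm c) (eV.injective h)
  -- the index set
  have hidx : Nat.card (Fin (Nat.card H - d)) = Nat.card (Ksub × ZMod m) := by
    rw [Nat.card_eq_fintype_card, Fintype.card_fin, Nat.card_prod, Nat.card_zmod, ← hdef]
    have h1 : d * (m + 1) = d * m + d := by ring
    have h2 : m + 1 = n := by omega
    rw [h2] at h1
    omega
  obtain ⟨idx⟩ := Finite.card_eq.mp hidx
  -- the transversals
  refine ⟨fun i => Set.range (fun c : D => f c (tau (idx i).2 c) (idx i).1), ?_, ?_⟩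
  · intro i
    set s := (idx i).2
    set k := (idx i).1
    refine ⟨⟨?_, ?_⟩, ?_⟩
    · rintro g ⟨c, rfl⟩
      exact hf_mem c (tau s c) k
    · intro g hg
      set cg : D := ⟨q g, ⟨g, hg, rfl⟩⟩ with hcgdef
      refine ⟨f cg (tau s cg) k, ⟨⟨cg, rfl⟩, ?_⟩, ?_⟩
      · rw [← hq]
        exact hf_q cg (tau s cg) k
      · rintro t ⟨⟨c2, rfl⟩, ht2⟩
        rw [← hq] at ht2
        have hc2 : c2 = cg := Subtype.ext (by rw [← hf_q c2 (tau s c2) k, ht2])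
        rw [hc2]
    · have key : ∀ g ∈ Set.range (fun c : D => f c (tau s c) k),
          g⁻¹ ∈ Set.range (fun c : D => f c (tau s c) k) := by
        rintro g ⟨c, rfl⟩
        refine ⟨tau s c, ?_⟩
        show f (tau s c) (tau s (tau s c)) k = _
        rw [htau_invol s c]
        exact (hf_inv c (tau s c) (Ne.symm (htau_ne s c)) k).symm
      ext g
      simp only [Set.mem_inv]
      constructor
      · intro h
        have := key _ h
        rwa [inv_inv] at this
      · intro h
        exact key _ h
  · intro i j hij
    rw [Set.disjoint_left]
    intro g hgi hgj
    obtain ⟨c, hc⟩ := hgi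
    obtain ⟨c2, hc2⟩ := hgj
    simp only [] at hc hc2
    have h1 : q g = (c : Quotient (QuotientGroup.rightRel H)) := by
      rw [← hc]; exact hf_q _ _ _
    have h2 : q g = (c2 : Quotient (QuotientGroup.rightRel H)) := by
      rw [← hc2]; exact hf_q _ _ _
    have hcc : c2 = c := Subtype.ext (by rw [← h1, ← h2])
    subst hcc
    have h3 : q g⁻¹ = ((tau (idx i).2 c2 : D) : Quotient (QuotientGroup.rightRel H)) := by
      rw [← hc]; exact hf_q' _ _ _
    have h4 : q g⁻¹ = ((tau (idx j).2 c2 : D) : Quotient (QuotientGroup.rightRel H)) := by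
      rw [← hc2]; exact hf_q' _ _ _
    have htt : tau (idx i).2 c2 = tau (idx j).2 c2 := Subtype.ext (by rw [← h3, ← h4])
    have hss : (idx i).2 = (idx j).2 := by
      by_contra hne
      exact htau_ss _ _ c2 hne htt
    have hkk : (idx i).1 = (idx j).1 := by
      apply hf_inj c2 (tau (idx i).2 c2)
      rw [hc]
      rw [← hc2, htt]
    exact hij (idx.injective (Prod.ext hkk hss))
end

section
/- Let G be a finite group, H a subgroup, and x ∈ G \ H with HxH = Hx⁻¹H and |H|/|H ∩ H^x| even. Then for every integer b with 0 ≤ b ≤ |H|, there exist b pairwise disjoint right transversals of H in HxH whose union is inverse-closed. -/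
/-!
Let `A = HxH` and `κ = |H ∩ H^x|`. The hypothesis `HxH = Hx⁻¹H` says `A⁻¹ = A`, so every right
coset `C ⊆ A` is the disjoint union of the sets `C ∩ D⁻¹`, `D` ranging over the right cosets in
`A`; each of these is a translate of `Hx ∩ xH = x (H^x ∩ H)`, of size `κ`. Hence the number `n` of
right cosets in `A` is `|H| / κ`, which is even.

It suffices to find an inverse-closed `S ⊆ A` meeting every right coset in `A` in exactly `b`
points: enumerating each `S ∩ C` by `Fin b` cuts `S` into `b` disjoint transversals. Such an `S` is
the union of pieces `P C D ⊆ C ∩ D⁻¹` with `P D C = (P C D)⁻¹` and `|P C D| = c C D`, for any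
symmetric matrix `c` with entries at most `κ`, row sums `b` and diagonal entries `0` or `κ` (so that
the diagonal pieces, `∅` or all of `C ∩ C⁻¹`, are inverse-closed). Labelling the cosets by
`ZMod 2 × ZMod (n / 2)`, the matrix `c i j = g (i + j)` qualifies when `g` is constantly `0` or `κ`
on `{0} × ZMod (n / 2)`, which contains every `i + i`.
-/

open scoped Pointwise

theorem Finset.exists_forall_le_sum_eq {ι : Type*} (s : Finset ι) {κ m : ℕ} (hm : m ≤ s.card * κ) :
    ∃ f : ι → ℕ, (∀ i, f i ≤ κ) ∧ ∑ i ∈ s, f i = m := by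
  classical
  induction s using Finset.induction_on generalizing m with
  | empty => exact ⟨0, fun _ => Nat.zero_le _, by simp_all⟩
  | @insert a s ha ih =>
    obtain ⟨f, hfκ, hfs⟩ := ih (m := m - min κ m)
      (by rw [Finset.card_insert_of_notMem ha] at hm; grind)
    refine ⟨Function.update f a (min κ m), fun i => ?_, ?_⟩
    · rcases eq_or_ne i a with rfl | h
      · simp
      · simpa [h] using hfκ i
    · rw [Finset.sum_insert ha, Finset.sum_update_of_notMem ha, hfs, Function.update_self]
      omega

theorem exists_weight_zmod_two_prod {p κ b : ℕ} [NeZero p] (hb : b ≤ 2 * p * κ) :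
    ∃ g : ZMod 2 × ZMod p → ℕ,
      (∀ k, g k ≤ κ) ∧ (∀ y, g (0, y) = 0 ∨ g (0, y) = κ) ∧ ∑ k, g k = b := by
  obtain ⟨u, hu, hub, hbu⟩ : ∃ u, (u = 0 ∨ u = κ) ∧ p * u ≤ b ∧ b - p * u ≤ p * κ := by
    rcases le_total (p * κ) b with h | h
    · exact ⟨κ, Or.inr rfl, h, by grind⟩
    · exact ⟨0, Or.inl rfl, by simp, by simpa using h⟩
  obtain ⟨f, hfκ, hf⟩ := (Finset.univ : Finset (ZMod p)).exists_forall_le_sum_eq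
    (κ := κ) (m := b - p * u) (by rwa [Finset.card_univ, ZMod.card])
  refine ⟨fun k => if k.1 = 0 then u else f k.2, fun k => ?_, fun y => by simpa using hu, ?_⟩
  · dsimp only
    split_ifs
    · rcases hu with rfl | rfl <;> simp
    · exact hfκ _
  · rw [Fintype.sum_prod_type]
    refine (Fin.sum_univ_two _).trans ?_
    change (∑ y, if (0 : ZMod 2) = 0 then u else f y) +
      (∑ y, if (1 : ZMod 2) = 0 then u else f y) = b
    simp only [↓reduceIte, one_ne_zero, Finset.sum_const, Finset.card_univ, ZMod.card,
      smul_eq_mul, hf]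
    omega

theorem exists_symmetric_rowSum_eq {ι : Type*} [Fintype ι] {p κ b : ℕ}
    (hι : Fintype.card ι = 2 * p) (hb : b ≤ 2 * p * κ) :
    ∃ c : ι → ι → ℕ, (∀ i j, c i j = c j i) ∧ (∀ i j, c i j ≤ κ) ∧
      (∀ i, c i i = 0 ∨ c i i = κ) ∧ ∀ i, ∑ j, c i j = b := by
  rcases Nat.eq_zero_or_pos p with rfl | hp
  · obtain rfl : b = 0 := by simpa using hb
    exact ⟨0, fun _ _ => rfl, fun _ _ => Nat.zero_le _, fun _ => Or.inl rfl, fun _ => by simp⟩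
  have : NeZero p := ⟨hp.ne'⟩
  obtain ⟨g, hgκ, hg0, hgsum⟩ := exists_weight_zmod_two_prod hb
  have e : ι ≃ ZMod 2 × ZMod p := Fintype.equivOfCardEq (by simp [hι])
  refine ⟨fun i j => g (e i + e j), fun i j => by simp only [add_comm], fun i j => hgκ _,
    fun i => ?_, fun i => ?_⟩
  · have : e i + e i = (0, (e i).2 + (e i).2) := Prod.ext (CharTwo.add_self_eq_zero _) rfl
    simp only [this, hg0]
  · rw [← hgsum]
    exact Fintype.sum_equiv (e.trans (Equiv.addLeft (e i))) _ _ fun j => rfl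

theorem exists_inv_symmetric_subsets {α ι : Type*} [InvolutiveInv α] [LinearOrder ι]
    {F : ι → ι → Set α} {κ : ℕ} (hFinv : ∀ i j, (F i j)⁻¹ = F j i)
    (hFκ : ∀ i j, (F i j).ncard = κ)
    {c : ι → ι → ℕ} (hc : ∀ i j, c i j = c j i) (hcκ : ∀ i j, c i j ≤ κ)
    (hdiag : ∀ i, c i i = 0 ∨ c i i = κ) :
    ∃ P : ι → ι → Set α, (∀ i j, P i j ⊆ F i j) ∧ (∀ i j, (P i j)⁻¹ = P j i) ∧
      ∀ i j, (P i j).ncard = c i j := by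
  choose Q hQF hQc using fun i j => Set.exists_subset_card_eq ((hcκ i j).trans (hFκ i j).ge)
  refine ⟨fun i j => if i < j then Q i j else if j < i then (Q j i)⁻¹ else
    if c i i = 0 then ∅ else F i j, fun i j => ?_, fun i j => ?_, fun i j => ?_⟩
  · dsimp only
    split_ifs
    · exact hQF i j
    · rw [← hFinv, Set.inv_subset_inv]; exact hQF j i
    · exact Set.empty_subset _
    · exact subset_rfl
  · rcases lt_trichotomy i j with h | rfl | h
    · simp [h, h.not_gt]
    · simp only [lt_irrefl, if_false]
      split_ifs
      · exact Set.inv_empty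
      · exact hFinv i i
    · simp [h, h.not_gt]
  · rcases lt_trichotomy i j with h | rfl | h
    · simp [h, hQc]
    · simp only [lt_irrefl, if_false]
      split_ifs with h
      · exact h.symm ▸ Set.ncard_empty α
      · exact (hFκ i i).trans ((hdiag i).resolve_left h).symm
    · simp [h, h.not_gt, Set.ncard_inv, hQc, hc i j]

theorem exists_disjoint_sections_of_ncard_fiber {α β : Type*} [Finite α] (π : α → β)
    {S A : Set α} {b : ℕ} (hSA : S ⊆ A) (hfib : ∀ a ∈ A, (S ∩ π ⁻¹' {π a}).ncard = b) :
    ∃ T : Fin b → Set α, (∀ k, T k ⊆ S) ∧ (∀ k, ∀ a ∈ A, ∃! t, t ∈ T k ∧ π t = π a) ∧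
      (Pairwise fun k l => Disjoint (T k) (T l)) ∧ ⋃ k, T k = S := by
  have hsect : ∀ y : π '' A, ∃ f : Fin b → α,
      Function.Injective f ∧ Set.range f = S ∩ π ⁻¹' {(y : β)} := by
    rintro ⟨_, a, ha, rfl⟩
    have e := Finite.equivFinOfCardEq ((Nat.card_coe_set_eq _).trans (hfib a ha))
    refine ⟨Subtype.val ∘ e.symm, Subtype.val_injective.comp e.symm.injective, ?_⟩
    rw [Set.range_comp, e.symm.range_eq_univ, Set.image_univ, Subtype.range_coe]
  choose f hfinj hfrange using hsect
  have hfS : ∀ (y : π '' A) k, f y k ∈ S ∩ π ⁻¹' {(y : β)} := fun y k =>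
    hfrange y ▸ Set.mem_range_self k
  have hfπ : ∀ (y y' : π '' A) k, π (f y k) = y' → y = y' := fun y y' k h =>
    Subtype.ext ((hfS y k).2.symm.trans h)
  refine ⟨fun k => Set.range fun y => f y k, ?_, ?_, ?_, ?_⟩
  · rintro k _ ⟨y, rfl⟩
    exact (hfS y k).1
  · intro k a ha
    refine ⟨f ⟨π a, a, ha, rfl⟩ k, ⟨⟨_, rfl⟩, (hfS _ k).2⟩, ?_⟩
    rintro _ ⟨⟨y, rfl⟩, hy⟩
    rw [hfπ y ⟨π a, a, ha, rfl⟩ k hy]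
  · rintro k l hkl
    rw [Set.disjoint_left]
    rintro _ ⟨y, rfl⟩ ⟨y', hy'⟩
    simp only at hy'
    obtain rfl := hfπ y' y l (by rw [hy']; exact (hfS y k).2)
    exact hkl (hfinj _ hy').symm
  · refine subset_antisymm (Set.iUnion_subset fun k => ?_) fun s hs => ?_
    · rintro _ ⟨y, rfl⟩
      exact (hfS y k).1
    · obtain ⟨k, hk⟩ : s ∈ Set.range (f ⟨π s, s, hSA hs, rfl⟩) := by rw [hfrange]; exact ⟨hs, rfl⟩
      exact Set.mem_iUnion.2 ⟨k, _, hk⟩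

theorem Set.ncard_iUnion_of_fintype {α ι : Type*} [Finite α] [Fintype ι] {s : ι → Set α}
    (h : Pairwise fun i j => Disjoint (s i) (s j)) : (⋃ i, s i).ncard = ∑ i, (s i).ncard := by
  rw [Set.ncard_iUnion_of_finite (fun _ => Set.toFinite _) h, finsum_eq_sum_of_fintype]

section Fibres

variable {α β : Type*} [InvolutiveInv α] (π : α → β)

theorem disjoint_inv_fiber {y y' : β} (h : y ≠ y') : Disjoint (π ⁻¹' {y})⁻¹ (π ⁻¹' {y'})⁻¹ :=
  (Disjoint.preimage π (Set.disjoint_singleton.2 h)).preimage Inv.inv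

variable {A : Set α}

theorem iUnion_fiber_inter_inv_fiber (hAinv : A⁻¹ = A) (hAsat : ∀ a ∈ A, π ⁻¹' {π a} ⊆ A)
    {a : α} (ha : a ∈ A) :
    ⋃ j : π '' A, π ⁻¹' {π a} ∩ (π ⁻¹' {(j : β)})⁻¹ = π ⁻¹' {π a} := by
  refine subset_antisymm (Set.iUnion_subset fun _ => Set.inter_subset_left) fun z hz => ?_
  have hz' : z⁻¹ ∈ A := by rw [← hAinv, Set.mem_inv, inv_inv]; exact hAsat a ha hz
  exact Set.mem_iUnion.2 ⟨⟨π z⁻¹, z⁻¹, hz', rfl⟩, hz, rfl⟩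

variable [Finite α] {κ : ℕ}

theorem ncard_fiber_eq_card_mul (hAinv : A⁻¹ = A) (hAsat : ∀ a ∈ A, π ⁻¹' {π a} ⊆ A)
    (hκ : ∀ a ∈ A, ∀ a' ∈ A, (π ⁻¹' {π a} ∩ (π ⁻¹' {π a'})⁻¹).ncard = κ) {a : α} (ha : a ∈ A) :
    (π ⁻¹' {π a}).ncard = Nat.card (π '' A) * κ := by
  classical
  have : Fintype (π '' A) := Fintype.ofFinite _
  rw [← iUnion_fiber_inter_inv_fiber π hAinv hAsat ha, Set.ncard_iUnion_of_fintype,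
    Finset.sum_congr rfl (g := fun _ => κ), Finset.sum_const, Finset.card_univ, smul_eq_mul,
    Nat.card_eq_fintype_card]
  · rintro ⟨_, a', ha', rfl⟩ -
    exact hκ a ha a' ha'
  · exact fun j j' h => (disjoint_inv_fiber π (Subtype.coe_ne_coe.2 h)).mono
      Set.inter_subset_right Set.inter_subset_right

theorem exists_inv_closed_subset_ncard_fiber (hAsat : ∀ a ∈ A, π ⁻¹' {π a} ⊆ A)
    (hκ : ∀ a ∈ A, ∀ a' ∈ A, (π ⁻¹' {π a} ∩ (π ⁻¹' {π a'})⁻¹).ncard = κ) {p b : ℕ}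
    (hcard : Nat.card (π '' A) = 2 * p) (hb : b ≤ 2 * p * κ) :
    ∃ S ⊆ A, S⁻¹ = S ∧ ∀ a ∈ A, (S ∩ π ⁻¹' {π a}).ncard = b := by
  classical
  have : Fintype (π '' A) := Fintype.ofFinite _
  let : LinearOrder (π '' A) := LinearOrder.lift' _ (Fintype.equivFin (π '' A)).injective
  let F : π '' A → π '' A → Set α := fun i j => π ⁻¹' {(i : β)} ∩ (π ⁻¹' {(j : β)})⁻¹
  obtain ⟨c, hcsymm, hcκ, hdiag, hcrow⟩ :=
    exists_symmetric_rowSum_eq (ι := π '' A) (by rwa [← Nat.card_eq_fintype_card]) hb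
  obtain ⟨P, hPF, hPinv, hPc⟩ := exists_inv_symmetric_subsets (F := F)
    (fun i j => by simp only [F, Set.inter_inv, inv_inv, Set.inter_comm])
    (fun ⟨_, a, ha, rfl⟩ ⟨_, a', ha', rfl⟩ => hκ a ha a' ha') hcsymm hcκ hdiag
  have hPfiber : ∀ i j, P i j ⊆ π ⁻¹' {(i : β)} := fun i j => (hPF i j).trans Set.inter_subset_left
  refine ⟨⋃ i, ⋃ j, P i j, Set.iUnion₂_subset fun i j => ?_, ?_, fun a ha => ?_⟩
  · obtain ⟨_, a, ha, rfl⟩ := i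
    exact (hPfiber _ j).trans (hAsat a ha)
  · simp_rw [Set.iUnion_inv, hPinv]
    exact Set.iUnion_comm _
  · let i : π '' A := ⟨π a, a, ha, rfl⟩
    have hrow : (⋃ i, ⋃ j, P i j) ∩ π ⁻¹' {π a} = ⋃ j, P i j := by
      refine subset_antisymm ?_ fun z hz => ?_
      · rintro z ⟨hz, hza⟩
        obtain ⟨i', j, hz⟩ := Set.mem_iUnion₂.1 hz
        obtain rfl : i' = i := Subtype.ext ((hPfiber i' j hz).symm.trans hza)
        exact Set.mem_iUnion.2 ⟨j, hz⟩
      · obtain ⟨j, hz⟩ := Set.mem_iUnion.1 hz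
        exact ⟨Set.mem_iUnion₂.2 ⟨i, j, hz⟩, hPfiber i j hz⟩
    rw [hrow, Set.ncard_iUnion_of_fintype fun j j' h => ?_, ← hcrow i]
    · exact Finset.sum_congr rfl fun j _ => hPc i j
    · exact (disjoint_inv_fiber π (Subtype.coe_ne_coe.2 h)).mono
        ((hPF i j).trans Set.inter_subset_right) ((hPF i j').trans Set.inter_subset_right)

end Fibres

open QuotientGroup DoubleCoset

section RightCosets

variable {G : Type*} [Group G] (H : Subgroup G)

theorem mk_rightRel_eq_mk_iff {y g : G} :
    Quotient.mk (rightRel H) y = Quotient.mk (rightRel H) g ↔ y * g⁻¹ ∈ H := by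
  rw [Quotient.eq, rightRel_apply, ← inv_mem_iff, mul_inv_rev, inv_inv]

theorem ncard_preimage_mk_rightRel (g : G) :
    (Quotient.mk (rightRel H) ⁻¹' {Quotient.mk (rightRel H) g}).ncard = Nat.card H := by
  have : Quotient.mk (rightRel H) ⁻¹' {Quotient.mk (rightRel H) g} = (· * g) '' (H : Set G) := by
    ext y
    simp only [Set.mem_preimage, Set.mem_singleton_iff, mk_rightRel_eq_mk_iff, Set.mem_image,
      SetLike.mem_coe]
    exact ⟨fun h => ⟨_, h, by group⟩, by rintro ⟨h, hh, rfl⟩; simpa using hh⟩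
  rw [this, Set.ncard_image_of_injective _ (mul_left_injective g), ← Nat.card_coe_set_eq]
  rfl

variable {H}

theorem doubleCoset_inv_eq {x : G}
    (heq : (H : Set G) * {x} * (H : Set G) = (H : Set G) * {x⁻¹} * (H : Set G)) :
    (doubleCoset x H H)⁻¹ = doubleCoset x H H := by
  rw [doubleCoset, mul_inv_rev, mul_inv_rev, Set.inv_singleton, inv_coe_set, ← mul_assoc, ← heq]

theorem mem_doubleCoset_of_mk_rightRel_eq {x a y : G} (ha : a ∈ doubleCoset x H H)
    (hy : Quotient.mk (rightRel H) y = Quotient.mk (rightRel H) a) : y ∈ doubleCoset x H H := by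
  obtain ⟨h₁, hh₁, h₂, hh₂, rfl⟩ := mem_doubleCoset.1 ha
  refine mem_doubleCoset.2 ⟨y * (h₁ * x * h₂)⁻¹ * h₁, mul_mem ((mk_rightRel_eq_mk_iff H).1 hy) hh₁,
    h₂, hh₂, by group⟩

theorem ncard_preimage_mk_rightRel_inter_inv {x a b : G} (ha : a ∈ doubleCoset x H H)
    (hb : b⁻¹ ∈ doubleCoset x H H) :
    (Quotient.mk (rightRel H) ⁻¹' {Quotient.mk (rightRel H) a} ∩
      (Quotient.mk (rightRel H) ⁻¹' {Quotient.mk (rightRel H) b})⁻¹).ncard =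
      ((H : Set G) ∩ (fun g => x⁻¹ * g * x) '' (H : Set G)).ncard := by
  obtain ⟨h₁, hh₁, h₂, hh₂, rfl⟩ := mem_doubleCoset.1 ha
  obtain ⟨u, hu, v, hv, hb⟩ := mem_doubleCoset.1 hb
  rw [inv_eq_iff_eq_inv] at hb
  subst hb
  -- `Hxh₂ ∩ uxH = ux (H^x ∩ H) h₂`
  have : Quotient.mk (rightRel H) ⁻¹' {Quotient.mk (rightRel H) (h₁ * x * h₂)} ∩
      (Quotient.mk (rightRel H) ⁻¹' {Quotient.mk (rightRel H) (u * x * v)⁻¹})⁻¹ =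
      (fun z => u * x * z * h₂) '' ((H : Set G) ∩ (fun g => x⁻¹ * g * x) '' (H : Set G)) := by
    ext y
    simp only [Set.mem_inter_iff, Set.mem_preimage, Set.mem_inv, Set.mem_singleton_iff,
      mk_rightRel_eq_mk_iff, Set.mem_image, SetLike.mem_coe, inv_inv]
    constructor
    · rintro ⟨hy₁, hy₂⟩
      refine ⟨x⁻¹ * u⁻¹ * y * h₂⁻¹, ⟨?_, u⁻¹ * (y * (h₁ * x * h₂)⁻¹) * h₁, ?_, by group⟩, by group⟩
      · have : x⁻¹ * u⁻¹ * y * h₂⁻¹ = v * (y⁻¹ * (u * x * v))⁻¹ * h₂⁻¹ := by group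
        rw [this]
        exact mul_mem (mul_mem hv (inv_mem hy₂)) (inv_mem hh₂)
      · exact mul_mem (mul_mem (inv_mem hu) hy₁) hh₁
    · rintro ⟨_, ⟨hz, w, hw, rfl⟩, rfl⟩
      constructor
      · have : u * x * (x⁻¹ * w * x) * h₂ * (h₁ * x * h₂)⁻¹ = u * w * h₁⁻¹ := by group
        rw [this]
        exact mul_mem (mul_mem hu hw) (inv_mem hh₁)
      · have : (u * x * (x⁻¹ * w * x) * h₂)⁻¹ * (u * x * v) = h₂⁻¹ * (x⁻¹ * w * x)⁻¹ * v := by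
          group
        rw [this]
        exact mul_mem (mul_mem (inv_mem hh₂) (inv_mem hz)) hv
  rw [this, Set.ncard_image_of_injective _ fun z z' h => by simpa using h]

end RightCosets

theorem stmt6_general {G : Type*} [Group G] [Fintype G] (H : Subgroup G) (x : G)
    (heq : (H : Set G) * {x} * (H : Set G) = (H : Set G) * {x⁻¹} * (H : Set G))
    (heven : Even (Nat.card H /
      ((H : Set G) ∩ ((fun g => x⁻¹ * g * x) '' (H : Set G))).ncard)) :
    ∀ b : ℕ, b ≤ Nat.card H →
      ∃ T : Fin b → Set G,
        (∀ i, IsRightTransversalOn H (T i) ((H : Set G) * {x} * (H : Set G))) ∧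
        (Pairwise fun i j => Disjoint (T i) (T j)) ∧
        (⋃ i, T i)⁻¹ = ⋃ i, T i := by
  intro b hb
  set κ := ((H : Set G) ∩ ((fun g => x⁻¹ * g * x) '' (H : Set G))).ncard
  set π := Quotient.mk (rightRel H)
  have hAinv := doubleCoset_inv_eq heq
  have hAsat : ∀ a ∈ doubleCoset x H H, π ⁻¹' {π a} ⊆ doubleCoset x H H :=
    fun a ha y hy => mem_doubleCoset_of_mk_rightRel_eq ha hy
  have hκ : ∀ a ∈ doubleCoset x H H, ∀ a' ∈ doubleCoset x H H,
      (π ⁻¹' {π a} ∩ (π ⁻¹' {π a'})⁻¹).ncard = κ := fun a ha a' ha' =>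
    ncard_preimage_mk_rightRel_inter_inv ha (by rwa [← hAinv, Set.inv_mem_inv])
  have hcard : Nat.card H = Nat.card (π '' doubleCoset x H H) * κ :=
    (ncard_preimage_mk_rightRel H x).symm.trans
      (ncard_fiber_eq_card_mul π hAinv hAsat hκ (mem_doubleCoset_self H H x))
  have hκpos : 0 < κ := Nat.pos_of_mul_pos_left (hcard ▸ Nat.card_pos)
  obtain ⟨p, hp⟩ : Even (Nat.card (π '' doubleCoset x H H)) := by
    rwa [hcard, Nat.mul_div_cancel _ hκpos] at heven
  obtain ⟨S, hSA, hSinv, hS⟩ := exists_inv_closed_subset_ncard_fiber π hAsat hκ (p := p) (b := b)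
    (by omega) (by rw [hcard, hp] at hb; linarith)
  obtain ⟨T, hTS, hT, hdisj, hTU⟩ := exists_disjoint_sections_of_ncard_fiber π hSA hS
  refine ⟨T, fun k => ⟨(hTS k).trans hSA, fun g hg => ?_⟩, hdisj, by rw [hTU, hSinv]⟩
  simpa only [π, mk_rightRel_eq_mk_iff] using hT k g hg

theorem stmt6 {G : Type*} [Group G] [Fintype G] (H : Subgroup G) (x : G)
    (hx : x ∉ H)
    (heq : (H : Set G) * {x} * (H : Set G) = (H : Set G) * {x⁻¹} * (H : Set G))
    (heven : Even (Nat.card H /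
      ((H : Set G) ∩ ((fun g => x⁻¹ * g * x) '' (H : Set G))).ncard)) :
    ∀ b : ℕ, b ≤ Nat.card H →
      ∃ T : Fin b → Set G,
        (∀ i, IsRightTransversalOn H (T i) ((H : Set G) * {x} * (H : Set G))) ∧
        (Pairwise fun i j => Disjoint (T i) (T j)) ∧
        (⋃ i, T i)⁻¹ = ⋃ i, T i :=
  stmt6_general H x heq heven
end

section
/- Let G be a finite group, H a subgroup, and x ∈ G \ H with HxH = Hx⁻¹H and |H|/|H ∩ H^x| odd. Then for every even integer b with 0 ≤ b ≤ |H|, there exist b pairwise disjoint right transversals of H in HxH whose union is inverse-closed. -/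
open scoped Pointwise

section

open Finset Function

namespace Finset

variable {α : Type*} {σ : α → α} {F : Finset α}

theorem mapsTo_sdiff_of_involutive [DecidableEq α] (hσ : Involutive σ) {P : Finset α}
    (hF : Set.MapsTo σ F F) (hP : Set.MapsTo σ P P) : Set.MapsTo σ ↑(F \ P) ↑(F \ P) := by
  intro g hg
  simp only [coe_sdiff, Set.mem_sdiff, mem_coe] at hg ⊢
  exact ⟨hF hg.1, fun h => hg.2 (hσ g ▸ hP h)⟩

theorem exists_mapsTo_subset_card_eq_two [DecidableEq α] (hσ : Involutive σ)
    (hF : Set.MapsTo σ F F) (h2 : 2 ≤ #F) : ∃ P ⊆ F, #P = 2 ∧ Set.MapsTo σ P P := by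
  by_cases hmoved : ∃ a ∈ F, σ a ≠ a
  · obtain ⟨a, ha, hσa⟩ := hmoved
    refine ⟨{a, σ a}, ?_, card_pair hσa.symm, ?_⟩
    · simpa [insert_subset_iff, ha] using hF ha
    · intro g hg
      rw [coe_pair] at hg ⊢
      rcases hg with rfl | rfl
      · exact Set.mem_insert_of_mem _ rfl
      · exact Set.mem_insert_iff.mpr (Or.inl (hσ a))
  · push Not at hmoved
    obtain ⟨P, hPF, hP⟩ := exists_subset_card_eq h2
    exact ⟨P, hPF, hP, fun g hg => (hmoved g (hPF hg)).symm ▸ hg⟩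

theorem exists_mapsTo_subset_card_eq_of_even [DecidableEq α] (hσ : Involutive σ)
    (hF : Set.MapsTo σ F F) {t : ℕ} (ht : Even t) (htF : t ≤ #F) :
    ∃ S ⊆ F, #S = t ∧ Set.MapsTo σ S S := by
  obtain ⟨n, rfl⟩ := ht
  induction n generalizing F with
  | zero => exact ⟨∅, empty_subset F, rfl, by simp⟩
  | succ n ih =>
    obtain ⟨P, hPF, hP, hσP⟩ := exists_mapsTo_subset_card_eq_two hσ hF (by omega)
    obtain ⟨S, hSF, hS, hσS⟩ := ih (mapsTo_sdiff_of_involutive hσ hF hσP)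
      (by rw [card_sdiff_of_subset hPF]; omega)
    refine ⟨S ∪ P, union_subset (hSF.trans sdiff_subset) hPF, ?_, ?_⟩
    · rw [card_union_of_disjoint (disjoint_of_subset_left hSF sdiff_disjoint)]
      omega
    · rw [coe_union]
      exact hσS.union_union hσP

theorem exists_fixed_point_of_odd_card (hσ : Involutive σ) (hF : Set.MapsTo σ F F)
    (hodd : Odd #F) : ∃ a ∈ F, σ a = a := by
  have : Fact (Nat.Prime 2) := ⟨Nat.prime_two⟩
  have hτ : Involutive (hF.restrict σ F F) := fun g => Subtype.ext (hσ g)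
  let τ : Equiv.Perm F := hτ.toPerm
  obtain ⟨⟨a, ha⟩, hfix⟩ := Equiv.Perm.exists_fixed_point_of_prime (p := 2) (n := 1)
    (σ := τ) (by rwa [Fintype.card_coe, ← even_iff_two_dvd, Nat.not_even_iff_odd])
    (by rw [pow_one, sq]; exact Equiv.ext hτ)
  exact ⟨a, ha, congrArg Subtype.val hfix⟩

theorem exists_mapsTo_subset_card_eq [DecidableEq α] (hσ : Involutive σ) (hF : Set.MapsTo σ F F)
    {t : ℕ} (htF : t ≤ #F) (hpar : Even t ∨ Odd #F) :
    ∃ S ⊆ F, #S = t ∧ Set.MapsTo σ S S := by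
  rcases Nat.even_or_odd t with ht | ht
  · exact exists_mapsTo_subset_card_eq_of_even hσ hF ht htF
  obtain ⟨a, ha, hσa⟩ := exists_fixed_point_of_odd_card hσ hF
    (hpar.resolve_left (Nat.not_even_iff_odd.mpr ht))
  have hσa' : Set.MapsTo σ ({a} : Finset α) ({a} : Finset α) := by simp [hσa]
  have haF : {a} ⊆ F := singleton_subset_iff.mpr ha
  obtain ⟨S, hSF, hS, hσS⟩ := exists_mapsTo_subset_card_eq_of_even hσ
    (mapsTo_sdiff_of_involutive hσ hF hσa') (Nat.Odd.sub_odd ht odd_one)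
    (by rw [card_sdiff_of_subset haF, card_singleton]; omega)
  refine ⟨S ∪ {a}, union_subset (hSF.trans sdiff_subset) haF, ?_, ?_⟩
  · rw [card_union_of_disjoint (disjoint_of_subset_left hSF sdiff_disjoint), card_singleton]
    have := ht.pos
    omega
  · rw [coe_union]
    exact hσS.union_union hσa'

end Finset

theorem exists_forall_le_sum_eq {k m c : ℕ} (hc : c ≤ k * m) :
    ∃ y : Fin k → ℕ, (∀ i, y i ≤ m) ∧ ∑ i, y i = c := by
  induction k generalizing c with
  | zero => exact ⟨Fin.elim0, Fin.rec0, by simp_all⟩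
  | succ k ih =>
    obtain ⟨y, hym, hy⟩ := ih (c := c - min c m) (by rw [Nat.succ_mul] at hc; omega)
    refine ⟨Fin.cons (min c m) y, Fin.cases (min_le_right c m) hym, ?_⟩
    rw [Fin.sum_univ_succ, Fin.cons_zero]
    simp only [Fin.cons_succ, hy]
    omega

theorem exists_forall_le_sum_eq_of_even {k m b : ℕ} (hb : Even b) (hbm : b ≤ k * m) :
    ∃ y : Fin k → ℕ, (∀ i, y i ≤ m) ∧ ∑ i, y i = b ∧
      ∀ i, Even (y i) ∨ Odd m := by
  rcases Nat.even_or_odd m with ⟨m', rfl⟩ | hm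
  · obtain ⟨b', rfl⟩ := hb
    obtain ⟨y, hym, hy⟩ := exists_forall_le_sum_eq (k := k) (m := m') (c := b')
      (by rw [mul_add] at hbm; omega)
    refine ⟨fun i => y i + y i, fun i => add_le_add (hym i) (hym i), ?_,
      fun i => Or.inl ⟨y i, rfl⟩⟩
    rw [sum_add_distrib, hy]
  · obtain ⟨y, hym, hy⟩ := exists_forall_le_sum_eq hbm
    exact ⟨y, hym, hy, fun _ => Or.inr hm⟩

theorem exists_symmetric_weights (ι : Type*) [Fintype ι] {m b : ℕ} (hb : Even b)
    (hbm : b ≤ Fintype.card ι * m) :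
    ∃ W : ι → ι → ℕ, (∀ a a', W a a' = W a' a) ∧ (∀ a a', W a a' ≤ m) ∧
      (∀ a, Even (W a a) ∨ Odd m) ∧ ∀ a, ∑ a', W a a' = b := by
  rcases isEmpty_or_nonempty ι with _ | _
  · exact ⟨fun _ _ => 0, by simp, by simp, isEmptyElim, isEmptyElim⟩
  have : NeZero (Fintype.card ι) := ⟨Fintype.card_ne_zero⟩
  obtain ⟨y, hym, hy, hpar⟩ := exists_forall_le_sum_eq_of_even hb hbm
  let e := Fintype.equivFin ι
  refine ⟨fun a a' => y (e a + e a'), fun a a' => congrArg y (add_comm _ _), fun a a' => hym _,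
    fun a => hpar _, fun a => ?_⟩
  rw [e.sum_comp (fun j => y (e a + j)), ← hy]
  exact Equiv.sum_comp (Equiv.addLeft (e a)) y

variable {α β : Type*} [DecidableEq β] {σ : α → α} {D : Finset α}

theorem exists_symmetric_selection [DecidableEq α] {ι : Type*} [LinearOrder ι]
    (hσ : Involutive σ) (F : ι → ι → Finset α)
    (hF : ∀ a a', Set.MapsTo σ (F a a') (F a' a)) (W : ι → ι → ℕ)
    (hW : ∀ a a', W a a' = W a' a) (hWF : ∀ a a', W a a' ≤ #(F a a'))
    (hWdiag : ∀ a, Even (W a a) ∨ Odd #(F a a)) :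
    ∃ S : ι → ι → Finset α, (∀ a a', S a a' ⊆ F a a') ∧
      (∀ a a', #(S a a') = W a a') ∧ ∀ a a', Set.MapsTo σ (S a a') (S a' a) := by
  have hsel : ∀ a a', ∃ S ⊆ F a a', #S = W a a' ∧ (a = a' → Set.MapsTo σ S S) := by
    intro a a'
    by_cases haa' : a = a'
    · subst haa'
      obtain ⟨S, hSF, hS, hσS⟩ :=
        exists_mapsTo_subset_card_eq hσ (hF a a) (hWF a a) (hWdiag a)
      exact ⟨S, hSF, hS, fun _ => hσS⟩
    · obtain ⟨S, hSF, hS⟩ := exists_subset_card_eq (hWF a a')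
      exact ⟨S, hSF, hS, fun h => absurd h haa'⟩
  choose S₀ hS₀F hS₀ hσS₀ using hsel
  refine ⟨fun a a' => if a ≤ a' then S₀ a a' else (S₀ a' a).image σ, fun a a' => ?_,
    fun a a' => ?_, fun a a' => ?_⟩
  · dsimp only
    split_ifs
    · exact hS₀F a a'
    · rw [image_subset_iff]
      exact fun g hg => hF a' a (hS₀F a' a hg)
  · dsimp only
    split_ifs
    · exact hS₀ a a'
    · rw [card_image_of_injective _ hσ.injective, hS₀, hW]
  · rcases lt_trichotomy a a' with h | rfl | h
    · simp only [if_pos h.le, if_neg (not_le.mpr h), coe_image]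
      exact Set.mapsTo_image σ _
    · simpa only [le_refl, if_true] using hσS₀ a a rfl
    · simp only [if_pos h.le, if_neg (not_le.mpr h), coe_image]
      rintro _ ⟨g, hg, rfl⟩
      rwa [mem_coe, hσ g]

def darts (D : Finset α) (σ : α → α) (p : α → β) (a a' : β) : Finset α :=
  {g ∈ D | p g = a ∧ p (σ g) = a'}

@[simp]
theorem mem_darts {p : α → β} {a a' : β} {g : α} :
    g ∈ darts D σ p a a' ↔ g ∈ D ∧ p g = a ∧ p (σ g) = a' :=
  mem_filter

theorem mapsTo_darts (hσ : Involutive σ) (hσD : Set.MapsTo σ D D) (p : α → β) (a a' : β) :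
    Set.MapsTo σ (darts D σ p a a') (darts D σ p a' a) := by
  intro g hg
  simp only [mem_coe, mem_darts, hσ g] at hg ⊢
  exact ⟨hσD hg.1, hg.2.2, hg.2.1⟩

theorem card_filter_eq_card_image_mul (hσD : Set.MapsTo σ D D) (p : α → β) {m : ℕ}
    (hm : ∀ u ∈ D, ∀ v ∈ D, #(darts D σ p (p u) (p v)) = m) {u : α} (hu : u ∈ D) :
    #{g ∈ D | p g = p u} = #(D.image p) * m := by
  rw [card_eq_sum_card_fiberwise (f := fun g => p (σ g)) (t := D.image p)
    fun g hg => mem_image_of_mem p (hσD (Finset.mem_filter.mp hg).1), ← smul_eq_mul,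
    ← sum_const]
  refine sum_congr rfl fun a' ha' => ?_
  obtain ⟨v, hv, rfl⟩ := mem_image.mp ha'
  rw [filter_filter, ← hm u hu v hv]
  rfl

theorem card_filter_biUnion_eq_sum [DecidableEq α] {p : α → β} {ι : Type*} [Fintype ι]
    {e : ι → β} (he : Injective e) {S : ι → ι → Finset α}
    (hS : ∀ a a', ∀ g ∈ S a a', p g = e a ∧ p (σ g) = e a') (c : ι) :
    #{g ∈ univ.biUnion (fun q : ι × ι => S q.1 q.2) | p g = e c} = ∑ a', #(S c a') := by
  have hfiber : {g ∈ univ.biUnion (fun q : ι × ι => S q.1 q.2) | p g = e c} =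
      univ.biUnion (S c) := by
    ext g
    simp only [Finset.mem_filter, Finset.mem_biUnion, mem_univ, true_and, Prod.exists]
    constructor
    · rintro ⟨⟨a, a', hg⟩, hgc⟩
      obtain rfl : a = c := he ((hS a a' g hg).1.symm.trans hgc)
      exact ⟨a', hg⟩
    · rintro ⟨a', hg⟩
      exact ⟨⟨c, a', hg⟩, (hS c a' g hg).1⟩
  rw [hfiber, card_biUnion]
  intro a₁ _ a₂ _ hne
  refine disjoint_left.mpr fun g hg₁ hg₂ => hne (he ?_)
  exact (hS c a₁ g hg₁).2.symm.trans (hS c a₂ g hg₂).2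

theorem exists_mapsTo_subset_card_filter_eq [DecidableEq α] (hσ : Involutive σ)
    (hσD : Set.MapsTo σ D D) (p : α → β) {m b : ℕ}
    (hm : ∀ u ∈ D, ∀ v ∈ D, #(darts D σ p (p u) (p v)) = m) (hb : Even b)
    (hbm : b ≤ #(D.image p) * m) :
    ∃ U ⊆ D, Set.MapsTo σ U U ∧ ∀ u ∈ D, #{g ∈ U | p g = p u} = b := by
  set B := D.image p
  let _ : LinearOrder B := LinearOrder.lift' _ (Fintype.equivFin B).injective
  have hB : ∀ a a' : B, #(darts D σ p a a') = m := by
    rintro ⟨a, ha⟩ ⟨a', ha'⟩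
    obtain ⟨u, hu, rfl⟩ := mem_image.mp ha
    obtain ⟨v, hv, rfl⟩ := mem_image.mp ha'
    exact hm u hu v hv
  obtain ⟨W, hW, hWm, hWdiag, hWsum⟩ :=
    exists_symmetric_weights B hb (by rwa [Fintype.card_coe])
  obtain ⟨S, hSF, hS, hσS⟩ := exists_symmetric_selection hσ
    (fun a a' : B => darts D σ p a a') (fun a a' => mapsTo_darts hσ hσD p a a') W hW
    (fun a a' => (hB a a').symm ▸ hWm a a')
    (fun a => (hB a a).symm ▸ hWdiag a)
  have hSD : ∀ a a', ∀ g ∈ S a a', g ∈ D ∧ p g = a ∧ p (σ g) = a' :=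
    fun a a' g hg => mem_darts.mp (hSF a a' hg)
  refine ⟨univ.biUnion fun q : B × B => S q.1 q.2, ?_, ?_, fun u hu => ?_⟩
  · simp only [biUnion_subset]
    exact fun q _ g hg => (hSD _ _ g hg).1
  · intro g hg
    simp only [coe_biUnion, coe_univ, Set.mem_univ, Set.iUnion_true, Set.mem_iUnion] at hg ⊢
    obtain ⟨⟨a, a'⟩, hg⟩ := hg
    exact ⟨⟨a', a⟩, hσS a a' hg⟩
  · rw [card_filter_biUnion_eq_sum Subtype.val_injective (fun a a' g hg => (hSD a a' g hg).2)
      ⟨p u, mem_image_of_mem p hu⟩, ← hWsum]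
    exact sum_congr rfl fun a' _ => hS _ a'

theorem exists_transversals_of_card_filter_eq {U : Finset α} (hUD : U ⊆ D) (p : α → β)
    {b : ℕ} (hU : ∀ u ∈ D, #{g ∈ U | p g = p u} = b) :
    ∃ T : Fin b → Set α, (∀ i, T i ⊆ D ∧ ∀ u ∈ D, ∃! t, t ∈ T i ∧ p u = p t) ∧
      Pairwise (Disjoint on T) ∧ ⋃ i, T i = U := by
  have hlabel : ∀ c ∈ D.image p, ∃ f : Fin b → α,
      Set.BijOn f Set.univ ({g ∈ U | p g = c} : Finset α) := by
    intro c hc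
    obtain ⟨u, hu, rfl⟩ := mem_image.mp hc
    let e := (Finset.equivFinOfCardEq (hU u hu)).symm
    refine ⟨fun i => e i, fun i _ => (e i).2, fun i _ j _ hij => e.injective (Subtype.ext hij),
      fun g hg => ⟨e.symm ⟨g, hg⟩, trivial, by simp⟩⟩
  choose f hf using hlabel
  have hfiber : ∀ c hc i, f c hc i ∈ U ∧ p (f c hc i) = c := fun c hc i =>
    Finset.mem_filter.mp ((hf c hc).mapsTo (Set.mem_univ i))
  refine ⟨fun i => {t | ∃ c hc, f c hc i = t}, fun i => ⟨?_, fun u hu => ?_⟩, ?_, ?_⟩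
  · rintro _ ⟨c, hc, rfl⟩
    exact hUD (hfiber c hc i).1
  · refine ⟨f (p u) (mem_image_of_mem p hu) i,
      ⟨⟨_, _, rfl⟩, (hfiber _ _ i).2.symm⟩, ?_⟩
    rintro _ ⟨⟨c, hc, rfl⟩, hpu⟩
    obtain rfl : c = p u := (hfiber c hc i).2.symm.trans hpu.symm
    rfl
  · intro i j hij
    refine Set.disjoint_left.mpr ?_
    rintro _ ⟨c, hc, rfl⟩ ⟨c', hc', hcc'⟩
    obtain rfl : c = c' := by rw [← (hfiber c hc i).2, ← hcc', (hfiber c' hc' j).2]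
    exact hij ((hf c hc).injOn trivial trivial hcc').symm
  · ext g
    simp only [Set.mem_iUnion, Set.mem_ofPred_eq, mem_coe]
    constructor
    · rintro ⟨i, c, hc, rfl⟩
      exact (hfiber c hc i).1
    · intro hg
      have hc := mem_image_of_mem p (hUD hg)
      obtain ⟨i, -, hi⟩ := (hf (p g) hc).surjOn (Finset.mem_filter.mpr ⟨hg, rfl⟩)
      exact ⟨i, p g, hc, hi⟩

end

section

open Finset DoubleCoset MulOpposite

variable {G : Type*} [Group G] {H : Subgroup G} {x u v w : G}

theorem inv_mem_doubleCoset (hx : doubleCoset x H H = doubleCoset x⁻¹ H H)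
    (hu : u ∈ doubleCoset x H H) : u⁻¹ ∈ doubleCoset x H H := by
  obtain ⟨h₁, hh₁, h₂, hh₂, rfl⟩ := mem_doubleCoset.mp hu
  rw [hx]
  exact mem_doubleCoset.mpr ⟨h₂⁻¹, inv_mem hh₂, h₁⁻¹, inv_mem hh₁, by group⟩

theorem rightCoset_subset_doubleCoset (hu : u ∈ doubleCoset x H H) :
    op u • (H : Set G) ⊆ doubleCoset x H H := by
  obtain ⟨h₁, hh₁, h₂, hh₂, rfl⟩ := mem_doubleCoset.mp hu
  intro g hg
  rw [mem_rightCoset_iff] at hg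
  exact mem_doubleCoset.mpr ⟨_, mul_mem hg hh₁, h₂, hh₂, by group⟩

theorem rightCoset_eq_iff_mem_rightCoset :
    op v • (H : Set G) = op u • H ↔ v ∈ op u • (H : Set G) := by
  rw [rightCoset_eq_iff, mem_rightCoset_iff, SetLike.mem_coe, ← inv_mem_iff, mul_inv_rev,
    inv_inv]

theorem ncard_rightCoset_inter_leftCoset (hu : u ∈ doubleCoset x H H)
    (hw : w ∈ doubleCoset x H H) :
    (op u • (H : Set G) ∩ w • (H : Set G)).ncard =
      (op x • (H : Set G) ∩ x • (H : Set G)).ncard := by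
  obtain ⟨h₁, hh₁, h₂, hh₂, rfl⟩ := mem_doubleCoset.mp hu
  obtain ⟨h₃, hh₃, h₄, hh₄, rfl⟩ := mem_doubleCoset.mp hw
  have hright :
      op (h₁ * x * h₂) • (H : Set G) = h₃ • op h₂ • op x • (H : Set G) := by
    rw [smul_comm h₃, smul_comm h₃, leftCoset_mem_leftCoset H hh₃, rightCoset_assoc,
      rightCoset_eq_iff]
    convert inv_mem hh₁ using 1
    group
  have hleft : (h₃ * x * h₄) • (H : Set G) = h₃ • op h₂ • x • (H : Set G) := by
    rw [smul_comm (op h₂) x, rightCoset_mem_rightCoset H hh₂, leftCoset_assoc,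
      leftCoset_eq_iff]
    convert inv_mem hh₄ using 1
    group
  rw [hright, hleft, ← Set.smul_set_inter, ← Set.smul_set_inter, Set.ncard_smul_set,
    Set.ncard_smul_set]

theorem coe_darts_rightCoset [DecidableEq (Set G)] {D : Finset G}
    (hD : (D : Set G) = doubleCoset x H H) (hu : u ∈ D) :
    (darts D Inv.inv (fun g => op g • (H : Set G)) (op u • H) (op v • H) : Set G) =
      op u • (H : Set G) ∩ v⁻¹ • (H : Set G) := by
  ext g
  simp only [mem_darts, Set.mem_inter_iff, rightCoset_eq_iff_mem_rightCoset,
    mem_rightCoset_iff, mem_leftCoset_iff, inv_inv, SetLike.mem_coe, ← mul_inv_rev, inv_mem_iff]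
  refine ⟨fun h => h.2, fun h => ⟨?_, h⟩⟩
  rw [← mem_coe, hD]
  exact rightCoset_subset_doubleCoset (hD ▸ hu) ((mem_rightCoset_iff u).mpr h.1)

theorem card_darts_rightCoset [DecidableEq (Set G)] {D : Finset G}
    (hD : (D : Set G) = doubleCoset x H H) (hx : doubleCoset x H H = doubleCoset x⁻¹ H H)
    (hu : u ∈ D) (hv : v ∈ D) :
    #(darts D Inv.inv (fun g => op g • (H : Set G)) (op u • H) (op v • H)) =
      (op x • (H : Set G) ∩ x • (H : Set G)).ncard := by
  rw [← Set.ncard_coe_finset, coe_darts_rightCoset hD hu,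
    ncard_rightCoset_inter_leftCoset (hD ▸ hu) (inv_mem_doubleCoset hx (hD ▸ hv))]

theorem card_filter_rightCoset_eq [DecidableEq (Set G)] {D : Finset G}
    (hD : (D : Set G) = doubleCoset x H H) (hu : u ∈ D) :
    #{g ∈ D | op g • (H : Set G) = op u • H} = Nat.card H := by
  have hcoe : (({g ∈ D | op g • (H : Set G) = op u • H} : Finset G) : Set G) =
      op u • (H : Set G) := by
    ext g
    simp only [coe_filter, Set.mem_ofPred_eq, rightCoset_eq_iff_mem_rightCoset,
      and_iff_right_iff_imp]
    intro hg
    rw [← mem_coe, hD]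
    exact rightCoset_subset_doubleCoset (hD ▸ hu) hg
  rw [← Set.ncard_coe_finset, hcoe, Set.ncard_smul_set, ← Nat.card_coe_set_eq,
    SetLike.coe_sort_coe]

end

theorem stmt7_general {G : Type*} [Group G] [Fintype G] (H : Subgroup G) (x : G)
    (heq : (H : Set G) * {x} * (H : Set G) = (H : Set G) * {x⁻¹} * (H : Set G)) :
    ∀ b : ℕ, Even b → b ≤ Nat.card H →
      ∃ T : Fin b → Set G,
        (∀ i, IsRightTransversalOn H (T i) ((H : Set G) * {x} * (H : Set G))) ∧
        (Pairwise fun i j => Disjoint (T i) (T j)) ∧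
        (⋃ i, T i)⁻¹ = ⋃ i, T i := by
  classical
  intro b hb hbH
  set D := (DoubleCoset.doubleCoset x (H : Set G) H).toFinset
  have hD : (D : Set G) = DoubleCoset.doubleCoset x H H := Set.coe_toFinset _
  have hxD : x ∈ D := by
    rw [← Finset.mem_coe, hD]
    exact DoubleCoset.mem_doubleCoset_self H H x
  have hinv : Set.MapsTo Inv.inv (D : Set G) D := fun g hg =>
    hD ▸ inv_mem_doubleCoset heq (hD ▸ hg)
  let p : G → Set G := fun g => MulOpposite.op g • (H : Set G)
  have hm := fun u (hu : u ∈ D) v (hv : v ∈ D) => card_darts_rightCoset hD heq hu hv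
  have hbm :
      b ≤ (D.image p).card * (MulOpposite.op x • (H : Set G) ∩ x • (H : Set G)).ncard := by
    rwa [← card_filter_eq_card_image_mul hinv p hm hxD, card_filter_rightCoset_eq hD hxD]
  obtain ⟨U, hUD, hUinv, hU⟩ :=
    exists_mapsTo_subset_card_filter_eq inv_involutive hinv p hm hb hbm
  obtain ⟨T, hT, hdisj, hTU⟩ := exists_transversals_of_card_filter_eq hUD p hU
  refine ⟨T, fun i => ⟨(hT i).1.trans hD.subset, fun g hg => ?_⟩, hdisj, ?_⟩
  · simpa only [p, rightCoset_eq_iff] using (hT i).2 g (by rwa [← Finset.mem_coe, hD])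
  · rw [hTU]
    exact (Set.inv_subset.mpr hUinv).antisymm hUinv

theorem stmt7 {G : Type*} [Group G] [Fintype G] (H : Subgroup G) (x : G)
    (hx : x ∉ H)
    (heq : (H : Set G) * {x} * (H : Set G) = (H : Set G) * {x⁻¹} * (H : Set G))
    (hodd : Odd (Nat.card H /
      ((H : Set G) ∩ ((fun g => x⁻¹ * g * x) '' (H : Set G))).ncard)) :
    ∀ b : ℕ, Even b → b ≤ Nat.card H →
      ∃ T : Fin b → Set G,
        (∀ i, IsRightTransversalOn H (T i) ((H : Set G) * {x} * (H : Set G))) ∧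
        (Pairwise fun i j => Disjoint (T i) (T j)) ∧
        (⋃ i, T i)⁻¹ = ⋃ i, T i :=
  stmt7_general H x heq
end

section
/- Let G be a finite group and H a subgroup. H is a perfect code of G (admits an inverse-closed right transversal in G) if and only if for every x ∈ G such that HxH = Hx⁻¹H and |H|/|H ∩ H^x| is odd, there exists y ∈ Hx with y² = 1. -/
open scoped Pointwise

/-- H is a perfect code of G: it admits an inverse-closed right transversal in G. -/
def IsPerfectCode {G : Type*} [Group G] (H : Subgroup G) : Prop :=
  ∃ T : Set G, (∀ g : G, ∃! t, t ∈ T ∧ t * g⁻¹ ∈ H) ∧ T⁻¹ = T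

/-!
Pass to left cosets (inverting a right transversal gives a left one) and send `gH` to the double
coset `HgH`; the fibre over `HgH` is the `H`-orbit of `gH`, of size `|H| / |H ∩ gHg⁻¹|`. An
inverse-closed transversal `T` amounts to an involution `σ` of `G ⧸ H` covering `D ↦ D⁻¹` on
double cosets (`σ (tH) = t⁻¹H` for `t ∈ T`) whose fixed cosets contain involutions. Given `T`,
`σ` restricts to an involution of each self-inverse fibre, so an odd one has a fixed point.
Conversely, the fibres over `D` and `D⁻¹` have equal size, so they can be matched so that a
fixed point occurs only in an odd self-inverse fibre, where the hypothesis provides an involution;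
choosing coset representatives compatibly along `σ` then gives `T`.
-/

open Function

namespace Function.Involutive

variable {α : Type*} {σ : α → α}

theorem exists_eq_self_of_odd_card [Finite α] (hσ : Involutive σ) (hodd : Odd (Nat.card α)) :
    ∃ a, σ a = a := by
  classical
  cases nonempty_fintype α
  by_contra! h
  have hsupp : (hσ.toPerm σ).support = Finset.univ := by
    ext a
    simp [h a]
  have htwo := Equiv.Perm.two_dvd_card_support (σ := hσ.toPerm σ) (by ext a; simp [sq, hσ a])
  rw [hsupp, Finset.card_univ, ← Nat.card_eq_fintype_card] at htwo
  exact Nat.not_even_iff_odd.2 hodd (even_iff_two_dvd.2 htwo)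

theorem exists_eq_self_of_odd_card_fiber {β : Type*} [Finite α] (hσ : Involutive σ)
    {π : α → β} {F : β → β} (hπ : ∀ a, π (σ a) = F (π a)) {b : β} (hb : F b = b)
    (hodd : Odd (Nat.card {a // π a = b})) : ∃ a, π a = b ∧ σ a = a := by
  let τ : {a // π a = b} → {a // π a = b} := fun a => ⟨σ a, by rw [hπ, a.2, hb]⟩
  have hτ : Involutive τ := fun a => Subtype.ext (hσ a)
  obtain ⟨a, ha⟩ := hτ.exists_eq_self_of_odd_card hodd
  exact ⟨a, a.2, congrArg Subtype.val ha⟩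

theorem exists_equivariant_choice {γ : Type*} [InvolutiveInv γ] (hσ : Involutive σ)
    {P : α → γ → Prop} (hP : ∀ a c, P a c → P (σ a) c⁻¹)
    (hex : ∀ a, ∃ c, P a c ∧ (σ a = a → c⁻¹ = c)) :
    ∃ u : α → γ, (∀ a, P a (u a)) ∧ ∀ a, u (σ a) = (u a)⁻¹ := by
  classical
  let : LinearOrder α := linearOrderOfSTO WellOrderingRel
  choose u₀ hu₀ hfix using hex
  refine ⟨fun a => if a ≤ σ a then u₀ a else (u₀ (σ a))⁻¹, fun a => ?_, fun a => ?_⟩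
  · dsimp only
    split_ifs
    · exact hu₀ a
    · simpa only [hσ a] using hP _ _ (hu₀ (σ a))
  · dsimp only
    rcases lt_trichotomy a (σ a) with h | h | h
    · simp [hσ a, h.le, not_le.2 h]
    · simp [← h, hfix a h.symm]
    · simp [hσ a, h.le, not_le.2 h]

end Function.Involutive

theorem exists_involutive_lift {α β : Type*} [Finite α] (π : α → β) {F : β → β}
    (hF : Involutive F)
    (hcard : ∀ a, Nat.card {a' // π a' = F (π a)} = Nat.card {a' // π a' = π a}) :
    ∃ σ : α → α, Involutive σ ∧ (∀ a, π (σ a) = F (π a)) ∧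
      ∀ a, σ a = a → Odd (Nat.card {a' // π a' = π a}) := by
  classical
  set n : β → ℕ := fun b => Nat.card {a // π a = b}
  have hn : ∀ b, n (F b) = n b := by
    intro b
    by_cases hb : ∃ a, π a = b ∨ π a = F b
    · obtain ⟨a, rfl | ha⟩ := hb
      · exact hcard a
      · simpa [ha, hF b] using (hcard a).symm
    · push Not at hb
      simp [n, hb]
  let e : α ≃ {p : β × ℕ // p.2 < n p.1} :=
    ((Equiv.sigmaFiberEquiv π).symm.trans
      (Equiv.sigmaCongrRight fun _ => (Finite.equivFin _).trans Fin.equivSubtype)).trans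
      (Equiv.subtypeProdEquivSigmaSubtype fun b i => i < n b).symm
  have he : ∀ a, (e a).1.1 = π a := fun _ => rfl
  -- Over a self-inverse `b` the fibre is reversed, so only its middle element (if any) is fixed.
  let s : {p : β × ℕ // p.2 < n p.1} → {p : β × ℕ // p.2 < n p.1} := fun p =>
    ⟨(F p.1.1, if F p.1.1 = p.1.1 then n p.1.1 - 1 - p.1.2 else p.1.2), by
      obtain ⟨⟨b, i⟩, hi⟩ := p
      dsimp only at hi ⊢
      split_ifs with h
      · rw [h]; omega
      · rwa [hn]⟩
  have hs : Involutive s := by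
    rintro ⟨⟨b, i⟩, hi⟩
    dsimp only at hi
    by_cases h : F b = b
    · simp only [s, h, if_true, Subtype.mk.injEq, Prod.mk.injEq, true_and]
      omega
    · simp [s, h, hF b, Ne.symm h]
  refine ⟨e.symm ∘ s ∘ e, fun a => by simp [hs (e a)], fun a => ?_, fun a ha => ?_⟩
  · rw [← he, comp_apply, comp_apply, Equiv.apply_symm_apply]
    rfl
  · replace ha : s (e a) = e a := by simpa [Equiv.symm_apply_eq] using ha
    change Odd (n (π a))
    rw [← he a]
    generalize e a = p at ha
    obtain ⟨⟨b, i⟩, hi⟩ := p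
    simp only [s, Subtype.mk.injEq, Prod.mk.injEq] at ha hi ⊢
    obtain ⟨hb, hi'⟩ := ha
    rw [if_pos hb] at hi'
    exact ⟨i, by omega⟩

namespace Subgroup

variable {G : Type*} [Group G] (H : Subgroup G)

theorem inv_mul_singleton_mul (g : G) :
    ((H : Set G) * {g} * H)⁻¹ = (H : Set G) * {g⁻¹} * H := by
  rw [mul_inv_rev, mul_inv_rev, inv_coe_set, Set.inv_singleton, mul_assoc]

theorem mul_singleton_mul_eq_iff {a g : G} :
    (H : Set G) * {a} * H = (H : Set G) * {g} * H ↔ a ∈ (H : Set G) * {g} * H := by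
  refine ⟨fun h => ?_, DoubleCoset.doubleCoset_eq_of_mem⟩
  rw [← h]
  exact DoubleCoset.mem_doubleCoset_self H H a

theorem exists_sq_eq_one_mem_mul_singleton {t g : G} (ht : t ∈ (H : Set G) * {g} * H)
    (ht2 : t ^ 2 = 1) : ∃ y ∈ (H : Set G) * {g}, y ^ 2 = 1 := by
  obtain ⟨a, ha, b, hb, rfl⟩ := DoubleCoset.mem_doubleCoset.1 ht
  refine ⟨b * (a * g * b) * b⁻¹, ?_, by rw [conj_pow, ht2, mul_one, mul_inv_cancel]⟩
  rw [Set.mul_singleton]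
  exact ⟨b * a, H.mul_mem hb ha, by group⟩

def cosetToDoubleCoset : G ⧸ H → Set G :=
  Quotient.lift (fun g => (H : Set G) * {g} * H) fun a b hab =>
    ((mul_singleton_mul_eq_iff H).2 (DoubleCoset.mem_doubleCoset.2
      ⟨1, H.one_mem, a⁻¹ * b, QuotientGroup.leftRel_apply.1 hab, by group⟩)).symm

@[simp]
theorem cosetToDoubleCoset_mk (g : G) :
    cosetToDoubleCoset H g = (H : Set G) * {g} * H := rfl

theorem cosetToDoubleCoset_eq_iff_mem_orbit (q : G ⧸ H) (g : G) :
    cosetToDoubleCoset H q = (H : Set G) * {g} * H ↔ q ∈ MulAction.orbit H (g : G ⧸ H) := by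
  induction q using QuotientGroup.induction_on with
  | H a =>
  rw [cosetToDoubleCoset_mk, mul_singleton_mul_eq_iff, MulAction.mem_orbit_iff]
  constructor
  · intro ha
    obtain ⟨k, hk, l, hl, rfl⟩ := DoubleCoset.mem_doubleCoset.1 ha
    exact ⟨⟨k, hk⟩, QuotientGroup.eq.2 (by simpa [mul_assoc] using hl)⟩
  · rintro ⟨⟨k, hk⟩, h⟩
    exact DoubleCoset.mem_doubleCoset.2
      ⟨k, hk, (k * g)⁻¹ * a, QuotientGroup.eq.1 h, by group⟩

theorem exists_mk_eq_and_mk_inv_eq {q q' : G ⧸ H}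
    (h : cosetToDoubleCoset H q' = (cosetToDoubleCoset H q)⁻¹) :
    ∃ t : G, (t : G ⧸ H) = q ∧ ((t⁻¹ : G) : G ⧸ H) = q' := by
  induction q using QuotientGroup.induction_on with
  | H g =>
  induction q' using QuotientGroup.induction_on with
  | H g' =>
  rw [cosetToDoubleCoset_mk, cosetToDoubleCoset_mk, inv_mul_singleton_mul,
    mul_singleton_mul_eq_iff] at h
  obtain ⟨a, ha, b, hb, rfl⟩ := DoubleCoset.mem_doubleCoset.1 h
  exact ⟨g * a⁻¹, QuotientGroup.eq.2 (by simpa using ha),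
    QuotientGroup.eq.2 (by simpa [mul_assoc] using hb)⟩

theorem exists_mk_eq_sq_eq_one {g y : G} (hy : y ∈ (H : Set G) * {g⁻¹}) (hy2 : y ^ 2 = 1) :
    ∃ t : G, (t : G ⧸ H) = g ∧ t ^ 2 = 1 := by
  rw [Set.mul_singleton] at hy
  obtain ⟨k, hk, rfl⟩ := hy
  exact ⟨(k * g⁻¹)⁻¹, QuotientGroup.eq.2 (by simpa using hk),
    by rw [inv_pow, hy2, inv_one]⟩

theorem image_coe_stabilizer_mk_inv (x : G) :
    Subtype.val '' (MulAction.stabilizer H ((x⁻¹ : G) : G ⧸ H) : Set H) =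
      (H : Set G) ∩ (fun k => x⁻¹ * k * x) '' H := by
  ext k
  simp only [Set.mem_image, SetLike.mem_coe, MulAction.mem_stabilizer_iff, Subtype.exists,
    exists_and_right, exists_eq_right, Set.mem_inter_iff]
  refine ⟨fun ⟨hk, h⟩ => ⟨hk, x * k * x⁻¹, ?_, by group⟩,
    fun ⟨hk, y, hy, hyk⟩ => ⟨hk, ?_⟩⟩
  · simpa [mul_assoc] using H.inv_mem (QuotientGroup.eq.1 h)
  · refine QuotientGroup.eq.2 ?_
    simpa [← hyk, mul_assoc] using H.inv_mem hy

theorem nat_card_fiber_cosetToDoubleCoset [Finite H] (x : G) :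
    Nat.card {q // cosetToDoubleCoset H q = (H : Set G) * {x⁻¹} * H} =
      Nat.card H / ((H : Set G) ∩ (fun k => x⁻¹ * k * x) '' H).ncard := by
  have horbit : Nat.card {q // cosetToDoubleCoset H q = (H : Set G) * {x⁻¹} * H} =
      (MulAction.stabilizer H ((x⁻¹ : G) : G ⧸ H)).index := by
    rw [MulAction.index_stabilizer, ← Nat.card_coe_set_eq]
    exact Nat.card_congr (Equiv.subtypeEquivRight fun q =>
      cosetToDoubleCoset_eq_iff_mem_orbit H q _)
  rw [horbit, ← image_coe_stabilizer_mk_inv, Set.ncard_image_of_injective _ Subtype.val_injective,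
    ← Nat.card_coe_set_eq]
  exact (Nat.div_eq_of_eq_mul_left Nat.card_pos (index_mul_card _).symm).symm

theorem ncard_inter_conj_image_inv (x : G) :
    ((H : Set G) ∩ (fun k => x * k * x⁻¹) '' H).ncard =
      ((H : Set G) ∩ (fun k => x⁻¹ * k * x) '' H).ncard := by
  have hinj : Injective fun k : G => x⁻¹ * k * x := fun a b h => by simpa using h
  rw [← Set.ncard_image_of_injective _ hinj, Set.image_inter hinj, Set.image_image,
    Set.inter_comm]
  simp [mul_assoc]

theorem nat_card_fiber_cosetToDoubleCoset_inv [Finite H] (q : G ⧸ H) :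
    Nat.card {q' // cosetToDoubleCoset H q' = (cosetToDoubleCoset H q)⁻¹} =
      Nat.card {q' // cosetToDoubleCoset H q' = cosetToDoubleCoset H q} := by
  induction q using QuotientGroup.induction_on with
  | H g =>
  rw [cosetToDoubleCoset_mk, inv_mul_singleton_mul]
  conv_rhs => rw [← inv_inv g]
  rw [nat_card_fiber_cosetToDoubleCoset, nat_card_fiber_cosetToDoubleCoset, inv_inv,
    ncard_inter_conj_image_inv]

theorem isPerfectCode_iff_exists_inv_eq :
    IsPerfectCode H ↔
      ∃ T : Set G, T⁻¹ = T ∧ ∀ q : G ⧸ H, ∃! t, t ∈ T ∧ (t : G ⧸ H) = q := by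
  refine exists_congr fun T => and_comm.trans (and_congr_right fun hT => ?_)
  rw [QuotientGroup.mk_surjective.forall]
  refine (Equiv.inv G).forall_congr fun g => (Equiv.inv G).existsUnique_congr fun t => ?_
  simp only [Equiv.inv_apply, QuotientGroup.eq, inv_inv, ← Set.mem_inv, hT]

theorem isPerfectCode_iff_exists_involutive :
    IsPerfectCode H ↔ ∃ σ : G ⧸ H → G ⧸ H, Involutive σ ∧
      (∀ q, cosetToDoubleCoset H (σ q) = (cosetToDoubleCoset H q)⁻¹) ∧
      ∀ q, σ q = q → ∃ t : G, (t : G ⧸ H) = q ∧ t ^ 2 = 1 := by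
  rw [isPerfectCode_iff_exists_inv_eq]
  constructor
  · rintro ⟨T, hTinv, hT⟩
    choose rep hrep huniq using hT
    have hrep_inv : ∀ q, rep ((rep q)⁻¹ : G) = (rep q)⁻¹ := fun q =>
      (huniq _ _ ⟨by rw [← hTinv]; exact Set.inv_mem_inv.2 (hrep q).1, rfl⟩).symm
    refine ⟨fun q => ((rep q)⁻¹ : G), fun q => ?_, fun q => ?_,
      fun q hq => ⟨rep q, (hrep q).2, ?_⟩⟩
    · simp only [hrep_inv, inv_inv, (hrep q).2]
    · conv_rhs => rw [← (hrep q).2]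
      rw [cosetToDoubleCoset_mk, cosetToDoubleCoset_mk, inv_mul_singleton_mul]
    · have h : (rep q)⁻¹ = rep q := by rw [← hrep_inv]; exact congrArg rep hq
      rw [sq, mul_eq_one_iff_eq_inv, h]
  · rintro ⟨σ, hσ, hπ, hfix⟩
    have hex : ∀ q, ∃ t : G, ((t : G ⧸ H) = q ∧ ((t⁻¹ : G) : G ⧸ H) = σ q) ∧
        (σ q = q → t⁻¹ = t) := by
      intro q
      by_cases hq : σ q = q
      · obtain ⟨t, ht, ht2⟩ := hfix q hq
        have h : t⁻¹ = t := inv_eq_of_mul_eq_one_right (by rw [← sq, ht2])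
        exact ⟨t, ⟨ht, by rw [h, ht, hq]⟩, fun _ => h⟩
      · obtain ⟨t, ht⟩ := exists_mk_eq_and_mk_inv_eq H (hπ q)
        exact ⟨t, ht, fun h => absurd h hq⟩
    obtain ⟨u, hu, hu_inv⟩ := hσ.exists_equivariant_choice
      (fun q t ⟨h₁, h₂⟩ => ⟨h₂, by rw [inv_inv, h₁, hσ q]⟩) hex
    refine ⟨Set.range u, ?_, fun q => ⟨u q, ⟨⟨q, rfl⟩, (hu q).1⟩, ?_⟩⟩
    · rw [Set.inv_range, ← hσ.surjective.range_comp]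
      exact congrArg Set.range (funext fun q => by simp [hu_inv])
    · rintro _ ⟨⟨q', rfl⟩, h⟩
      rw [← h, (hu q').1]

end Subgroup

open Subgroup

theorem stmt9 {G : Type*} [Group G] [Fintype G] (H : Subgroup G) :
    IsPerfectCode H ↔
      ∀ x : G,
        (H : Set G) * {x} * (H : Set G) = (H : Set G) * {x⁻¹} * (H : Set G) →
        Odd (Nat.card H /
          ((H : Set G) ∩ ((fun g => x⁻¹ * g * x) '' (H : Set G))).ncard) →
        ∃ y ∈ (H : Set G) * {x}, y ^ 2 = 1 := by
  rw [isPerfectCode_iff_exists_involutive]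
  constructor
  · rintro ⟨σ, hσ, hπ, hfix⟩ x hx hodd
    obtain ⟨q, hq, hqσ⟩ := hσ.exists_eq_self_of_odd_card_fiber hπ
      (by rw [inv_mul_singleton_mul, inv_inv, hx]) (by rwa [nat_card_fiber_cosetToDoubleCoset])
    obtain ⟨t, rfl, ht⟩ := hfix q hqσ
    rw [cosetToDoubleCoset_mk, mul_singleton_mul_eq_iff, ← hx] at hq
    exact exists_sq_eq_one_mem_mul_singleton H hq ht
  · intro h
    obtain ⟨σ, hσ, hπ, hodd⟩ := exists_involutive_lift (cosetToDoubleCoset H) inv_involutive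
      (nat_card_fiber_cosetToDoubleCoset_inv H)
    refine ⟨σ, hσ, hπ, fun q hq => ?_⟩
    induction q using QuotientGroup.induction_on with
    | H g =>
    have hself := hπ g
    rw [hq, cosetToDoubleCoset_mk, inv_mul_singleton_mul] at hself
    obtain ⟨y, hy, hy2⟩ := h g⁻¹ (by rw [inv_inv, ← hself]) (by
      rw [← nat_card_fiber_cosetToDoubleCoset, inv_inv]
      exact hodd g hq)
    exact exists_mk_eq_sq_eq_one H hy hy2
end

section
/- Let G be a finite group and H a nontrivial subgroup. Then H is a perfect code of G if and only if for every pair of integers a, b with 0 ≤ a ≤ |H|−1, 0 ≤ b ≤ |H|, and gcd(2, |H|−1) dividing a, the subgroup H is an (a,b)-regular set of G, i.e., there exists an inverse-closed subset S of G \ {1} such that in the Cayley graph Cay(G,S), every element of H is adjacent to exactly a elements of H and every element of G \ H is adjacent to exactly b elements of H. -/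
/-!
Forward direction: take `S = A ∪ B`, where `A ⊆ H \ {1}` is inverse-closed of size `a` (for odd `a`
the gcd condition makes `|H|` even, and Cauchy's theorem supplies an involution for `A`) and
`B ⊆ G \ H` is inverse-closed and meets every right coset `H g ≠ H` in exactly `b` elements.

`B` is assembled from one piece for each pair `{D, D⁻¹}` of double cosets `D = H x H`. Sorting
`z ∈ D` by the pair of right cosets `(H z, H z⁻¹)` cuts `D` into an `m × m` array of blocks, all of
size `ℓ = |H x ∩ x H|`, with `m ℓ = |H|`, and inversion carries it onto the transposed array of
`D⁻¹`. Index the rows and columns by `ZMod m` and take `f (i + j)` elements of block `(i, j)`, where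
`f ≤ ℓ` and `∑ f = b`: then every row and every column gets `b` elements, and the pieces in blocks
`(i, j)` and `(j, i)` are chosen mutually inverse. For `D = D⁻¹` the diagonal blocks need
inverse-closed pieces, and one of odd size exists only if the block contains an involution. This is
automatic for odd `ℓ`; for even `ℓ`, `f` is made even except at one slot `s₁` such that every `i`
with `i + i = s₁` has an involution in block `(i, i)`: for even `m` take `s₁ = 1`, and for odd `m`
the inverse-closed transversal meets `D` in an inverse-closed set of odd size `m`, hence in an
involution.

Conversely, a `(0, 1)`-regular `S` makes `S ∪ {1}` an inverse-closed right transversal.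
-/

open scoped Pointwise

open Finset

namespace Finset

lemma inv_union {α : Type*} [Inv α] [DecidableEq α] (s t : Finset α) : (s ∪ t)⁻¹ = s⁻¹ ∪ t⁻¹ := by
  simp only [inv_def, image_union]

variable {α : Type*} [InvolutiveInv α] [DecidableEq α] {s t : Finset α}

protected lemma inv_inv (s : Finset α) : s⁻¹⁻¹ = s := by
  ext x; simp only [mem_inv', inv_inv]

lemma inv_sdiff_of_inv_eq (hs : s⁻¹ = s) (ht : t⁻¹ = t) : (s \ t)⁻¹ = s \ t := by
  rw [inv_def, image_sdiff _ _ inv_injective, ← inv_def, ← inv_def, hs, ht]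

lemma exists_subset_inv_eq_card_eq_two (hs : s⁻¹ = s) (h2 : 2 ≤ #s) :
    ∃ p ⊆ s, p⁻¹ = p ∧ #p = 2 := by
  by_cases hfix : ∃ x ∈ s, x⁻¹ ≠ x
  · obtain ⟨x, hx, hne⟩ := hfix
    refine ⟨{x, x⁻¹}, ?_, ?_, card_pair hne.symm⟩
    · simpa [insert_subset_iff, hx] using (mem_inv'.mp (hs.symm ▸ hx : x ∈ s⁻¹))
    · rw [inv_insert, inv_singleton, inv_inv, pair_comm]
  · push Not at hfix
    obtain ⟨x, hx, y, hy, hxy⟩ := one_lt_card.mp h2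
    refine ⟨{x, y}, by simp [insert_subset_iff, hx, hy], ?_, card_pair hxy⟩
    rw [inv_insert, inv_singleton, hfix x hx, hfix y hy]

lemma exists_subset_inv_eq_card_eq_two_mul (hs : s⁻¹ = s) {j : ℕ} (hj : 2 * j ≤ #s) :
    ∃ t ⊆ s, t⁻¹ = t ∧ #t = 2 * j := by
  induction j generalizing s with
  | zero => exact ⟨∅, empty_subset _, inv_empty, rfl⟩
  | succ j ih =>
    obtain ⟨p, hps, hp, hp2⟩ := exists_subset_inv_eq_card_eq_two hs (by omega)
    obtain ⟨t, hts, ht, htj⟩ :=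
      ih (inv_sdiff_of_inv_eq hs hp) (by rw [card_sdiff_of_subset hps]; omega)
    refine ⟨t ∪ p, union_subset (hts.trans sdiff_subset) hps, by rw [inv_union, ht, hp], ?_⟩
    rw [card_union_of_disjoint (disjoint_of_subset_left hts sdiff_disjoint), htj, hp2]
    ring

lemma exists_inv_eq_self_of_odd_card (hs : s⁻¹ = s) (hodd : Odd #s) : ∃ x ∈ s, x⁻¹ = x := by
  obtain ⟨j, hj⟩ := hodd
  obtain ⟨t, hts, ht, htj⟩ := exists_subset_inv_eq_card_eq_two_mul hs (j := j) (by omega)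
  obtain ⟨x, hx⟩ := card_eq_one.mp (show #(s \ t) = 1 by rw [card_sdiff_of_subset hts]; omega)
  have hinv := inv_sdiff_of_inv_eq hs ht
  rw [hx, inv_singleton, singleton_inj] at hinv
  exact ⟨x, mem_sdiff.mp (hx ▸ mem_singleton_self x) |>.1, hinv⟩

lemma exists_subset_inv_eq_card_eq (hs : s⁻¹ = s) {k : ℕ} (hk : k ≤ #s)
    (hpar : Even k ∨ ∃ x ∈ s, x⁻¹ = x) : ∃ t ⊆ s, t⁻¹ = t ∧ #t = k := by
  rcases Nat.even_or_odd k with ⟨j, rfl⟩ | hodd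
  · simpa only [two_mul] using exists_subset_inv_eq_card_eq_two_mul hs (j := j) (by omega)
  obtain ⟨x, hx, hxx⟩ := hpar.resolve_left (Nat.not_even_iff_odd.mpr hodd)
  obtain ⟨j, rfl⟩ := hodd
  have hsx : (s.erase x)⁻¹ = s.erase x := by
    rw [← sdiff_singleton_eq_erase]
    exact inv_sdiff_of_inv_eq hs (by rw [inv_singleton, hxx])
  obtain ⟨t, hts, ht, htj⟩ :=
    exists_subset_inv_eq_card_eq_two_mul hsx (j := j) (by rw [card_erase_of_mem hx]; omega)
  refine ⟨insert x t, insert_subset hx (hts.trans (erase_subset x s)), ?_, ?_⟩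
  · rw [inv_insert, hxx, ht]
  · rw [card_insert_of_notMem fun h => (notMem_erase x s) (hts h), htj]

end Finset

lemma exists_le_sum_eq {ι : Type*} [Fintype ι] (c : ι → ℕ) {n : ℕ} (hn : n ≤ ∑ i, c i) :
    ∃ g : ι → ℕ, (∀ i, g i ≤ c i) ∧ ∑ i, g i = n := by
  obtain ⟨g, hg, hgn⟩ := Finsupp.exists_le_degree_eq (Finsupp.equivFunOnFinite.symm c) n
    (by rwa [Finsupp.degree_eq_sum])
  exact ⟨g, fun i => hg i, by rwa [Finsupp.degree_eq_sum] at hgn⟩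

lemma exists_le_sum_eq_even_except {ι : Type*} [Fintype ι] [DecidableEq ι] (s₁ : ι) {ℓ b : ℕ}
    (hb : b ≤ Fintype.card ι * ℓ) :
    ∃ f : ι → ℕ, (∀ i, f i ≤ ℓ) ∧ ∑ i, f i = b ∧ (Even ℓ → ∀ i ≠ s₁, Even (f i)) := by
  rcases Nat.even_or_odd ℓ with ⟨k, rfl⟩ | hodd
  · set ε : ι → ℕ := fun i => if i = s₁ then b % 2 else 0
    have hε : ∑ i, ε i = b % 2 := by simp [ε]
    have hεk : ∀ i, ε i ≤ k := fun i => by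
      have : b % 2 ≤ k := by
        rcases Nat.eq_zero_or_pos k with rfl | hk
        · simp_all
        · omega
      by_cases h : i = s₁ <;> simp [ε, h, this]
    obtain ⟨g, hg, hgsum⟩ := exists_le_sum_eq (fun i => k - ε i) (n := b / 2) (by
      rw [sum_tsub_distrib _ fun i _ => hεk i, hε, sum_const, card_univ, smul_eq_mul]
      have : Fintype.card ι * (k + k) = 2 * (Fintype.card ι * k) := by ring
      omega)
    refine ⟨fun i => 2 * g i + ε i, fun i => ?_, ?_, fun _ i hi => ?_⟩
    · have := hg i
      have := hεk i
      show 2 * g i + ε i ≤ k + k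
      omega
    · rw [sum_add_distrib, ← mul_sum, hgsum, hε]; omega
    · simp [ε, hi]
  · obtain ⟨f, hf, hfb⟩ := exists_le_sum_eq (fun _ : ι => ℓ) (n := b) (by simpa [mul_comm] using hb)
    exact ⟨f, hf, hfb, fun h => absurd hodd (Nat.not_odd_iff_even.mpr h)⟩

lemma ZMod.exists_forall_add_self_eq {m : ℕ} [NeZero m] (P : ZMod m → Prop)
    (h : Odd m → ∃ i, P i) : ∃ s, ∀ i, i + i = s → P i := by
  rcases Nat.even_or_odd m with hm | hm
  · refine ⟨1, fun i hi => absurd (congrArg (ZMod.castHom (even_iff_two_dvd.mp hm) (ZMod 2)) hi) ?_⟩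
    rw [map_add, map_one]
    generalize ZMod.castHom _ (ZMod 2) i = c
    revert c; decide
  · obtain ⟨i₀, hi₀⟩ := h hm
    have h2 : IsUnit (2 : ZMod m) := by
      exact_mod_cast (ZMod.isUnit_iff_coprime 2 m).mpr (Nat.coprime_two_left.mpr hm)
    refine ⟨i₀ + i₀, fun i hi => ?_⟩
    rw [← two_mul, ← two_mul] at hi
    rwa [h2.mul_left_cancel hi]

lemma Finset.exists_injective_zmod {α : Type*} (s : Finset α) {m : ℕ} [NeZero m] (hm : #s = m) :
    ∃ e : ZMod m → α, Function.Injective e ∧ ∀ a, (∃ i, e i = a) ↔ a ∈ s := by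
  let f : ZMod m ≃ s := Fintype.equivOfCardEq (by rw [ZMod.card, Fintype.card_coe, hm])
  refine ⟨fun i => f i, Subtype.val_injective.comp f.injective, fun a => ⟨?_, fun ha => ?_⟩⟩
  · rintro ⟨i, rfl⟩; exact (f i).2
  · exact ⟨f.symm ⟨a, ha⟩, by simp⟩

section SymmetricSelection

variable {α ι : Type*} [InvolutiveInv α] [DecidableEq α]

lemma exists_symmetric_selection_s10 (X : ι → ι → Finset α) (hX : ∀ i j, (X i j)⁻¹ = X j i)
    (n : ι → ι → ℕ) (hn : ∀ i j, n i j = n j i) (hle : ∀ i j, n i j ≤ #(X i j))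
    (hdiag : ∀ i, Even (n i i) ∨ ∃ x ∈ X i i, x⁻¹ = x) :
    ∃ W : ι → ι → Finset α, ∀ i j, W i j ⊆ X i j ∧ (W i j)⁻¹ = W j i ∧ #(W i j) = n i j := by
  classical
  -- any linear order decides which of the blocks `(i, j)`, `(j, i)` gets the free choice
  let _ : LinearOrder ι := IsWellOrder.linearOrder WellOrderingRel
  choose V hVX hV using fun i j => exists_subset_card_eq (hle i j)
  choose D hDX hD hDn using fun i => exists_subset_inv_eq_card_eq (hX i i) (hle i i) (hdiag i)
  refine ⟨fun i j => if i < j then V i j else if j < i then (V j i)⁻¹ else D i, fun i j => ?_⟩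
  rcases lt_trichotomy i j with h | rfl | h
  · simp only [h, h.not_gt, if_true, if_false]
    exact ⟨hVX i j, trivial, hV i j⟩
  · simp only [lt_irrefl, if_false]
    exact ⟨hDX i, hD i, hDn i⟩
  · simp only [h, h.not_gt, if_true, if_false, card_inv, hV, hn i j]
    exact ⟨hX j i ▸ inv_subset_inv (hVX j i), Finset.inv_inv _, trivial⟩

variable [Fintype α] {κ : Type*} [DecidableEq κ] (ρ : α → κ)

def block (q r : κ) : Finset α := {z | ρ z = q ∧ ρ z⁻¹ = r}

lemma inv_block (q r : κ) : (block ρ q r)⁻¹ = block ρ r q := by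
  ext z; simp [block, and_comm]

variable [Fintype ι]

lemma exists_inv_eq_card_row_eq_sum (E : ι → κ) (hE : Function.Injective E)
    (n : ι → ι → ℕ) (hn : ∀ i j, n i j = n j i) (hle : ∀ i j, n i j ≤ #(block ρ (E i) (E j)))
    (hdiag : ∀ i, Even (n i i) ∨ ∃ x ∈ block ρ (E i) (E i), x⁻¹ = x) :
    ∃ U : Finset α, U⁻¹ = U ∧ (∀ z ∈ U, ∃ i, ρ z = E i) ∧
      ∀ i, #{z ∈ U | ρ z = E i} = ∑ j, n i j := by
  obtain ⟨W, hW⟩ := exists_symmetric_selection_s10 _ (fun i j => inv_block ρ (E i) (E j)) n hn hle hdiag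
  have hmem : ∀ {i j z}, z ∈ W i j → ρ z = E i ∧ ρ z⁻¹ = E j := fun h => by
    simpa [block] using (hW _ _).1 h
  refine ⟨univ.biUnion fun p : ι × ι => W p.1 p.2, ?_, ?_, fun i => ?_⟩
  · have hinv : ∀ i j z, z⁻¹ ∈ W i j ↔ z ∈ W j i := fun i j z => by
      rw [← mem_inv', (hW i j).2.1]
    ext z
    simp only [mem_inv', mem_biUnion, mem_univ, true_and, Prod.exists]
    constructor
    · rintro ⟨i, j, h⟩; exact ⟨j, i, (hinv i j z).1 h⟩
    · rintro ⟨i, j, h⟩; exact ⟨j, i, (hinv j i z).2 h⟩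
  · simp only [mem_biUnion, mem_univ, true_and, Prod.exists]
    rintro z ⟨i, j, h⟩
    exact ⟨i, (hmem h).1⟩
  · have hrow : ({z ∈ univ.biUnion fun p : ι × ι => W p.1 p.2 | ρ z = E i} : Finset α) =
        univ.biUnion (W i) := by
      ext z
      simp only [mem_filter, mem_biUnion, mem_univ, true_and, Prod.exists]
      constructor
      · rintro ⟨⟨i', j, h⟩, hz⟩
        exact ⟨j, hE ((hmem h).1.symm.trans hz) ▸ h⟩
      · rintro ⟨j, h⟩
        exact ⟨⟨i, j, h⟩, (hmem h).1⟩
    rw [hrow, card_biUnion]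
    · exact sum_congr rfl fun j _ => (hW i j).2.2
    · intro j _ j' _ hjj'
      exact disjoint_left.mpr fun z h h' => hjj' (hE ((hmem h).2.symm.trans (hmem h').2))

end SymmetricSelection

namespace PerfectCode

variable {G : Type*} [Group G] (H : Subgroup G)

local notation "ρ" => Quotient.mk (QuotientGroup.rightRel H)
local notation "δ" => DoubleCoset.mk H H

lemma mk_eq_mk_iff {y z : G} : ρ y = ρ z ↔ z * y⁻¹ ∈ H := by
  rw [Quotient.eq, QuotientGroup.rightRel_apply]

lemma mk_eq_mk_iff_of_mem {v : G} (hv : v ∈ H) (z : G) : ρ z = ρ v ↔ z ∈ H :=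
  (mk_eq_mk_iff H).trans ((H.mul_mem_cancel_left hv).trans H.inv_mem_iff)

def doubleCosetOf : Quotient (QuotientGroup.rightRel H) → DoubleCoset.Quotient (H : Set G) H :=
  Quotient.lift (DoubleCoset.mk H H) fun y z hyz =>
    (DoubleCoset.eq H H y z).2
      ⟨z * y⁻¹, QuotientGroup.rightRel_apply.mp hyz, 1, H.one_mem, by group⟩

@[simp] lemma doubleCosetOf_mk (z : G) : doubleCosetOf H (ρ z) = δ z := rfl

lemma doubleCoset_inv_eq_of_eq {y z : G} (h : δ y = δ z) : δ y⁻¹ = δ z⁻¹ := by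
  obtain ⟨a, ha, c, hc, rfl⟩ := (DoubleCoset.eq H H y z).1 h
  exact (DoubleCoset.eq H H _ _).2 ⟨c⁻¹, H.inv_mem hc, a⁻¹, H.inv_mem ha, by group⟩

def pairClass (z : G) : Sym2 (DoubleCoset.Quotient (H : Set G) H) := s(δ z, δ z⁻¹)

lemma pairClass_eq_iff {y z : G} : pairClass H y = pairClass H z ↔ δ y = δ z ∨ δ y = δ z⁻¹ := by
  refine ⟨fun h => (Sym2.eq_iff.mp h).imp And.left And.left, ?_⟩
  rintro (h | h)
  · rw [pairClass, pairClass, h, doubleCoset_inv_eq_of_eq H h]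
  · have h' := doubleCoset_inv_eq_of_eq H h
    rw [inv_inv] at h'
    rw [pairClass, pairClass, h, h', Sym2.eq_swap]

lemma pairClass_eq_of_mk_eq {y z : G} (h : ρ y = ρ z) : pairClass H y = pairClass H z :=
  (pairClass_eq_iff H).2 (Or.inl (congrArg (doubleCosetOf H) h))

open scoped Classical

lemma ncard_eq_card_filter_mk (S : Finset G) (v : G) :
    {h ∈ (H : Set G) | h * v⁻¹ ∈ (S : Set G)}.ncard = #{z ∈ S | ρ z = ρ v⁻¹} := by
  rw [← Set.ncard_image_of_injective _ (mul_left_injective v⁻¹), ← Set.ncard_coe_finset]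
  congr 1
  ext z
  simp [mk_eq_mk_iff, ← mul_inv_rev, and_comm]

variable [Fintype G]

lemma card_filter_mk_eq (z : G) : #({y | ρ y = ρ z} : Finset G) = Nat.card H := by
  rw [Nat.card_eq_fintype_card, Fintype.card_subtype]
  refine card_nbij' (· * z⁻¹) (· * z) ?_ ?_ ?_ ?_ <;> intro y <;>
    simp [mk_eq_mk_iff, ← H.inv_mem_iff (x := z * y⁻¹)]

/-- `|H z ∩ z H|` -/
noncomputable def cellCard (z : G) : ℕ := #(block ρ (ρ z) (ρ z⁻¹))

lemma cellCard_inv (z : G) : cellCard H z⁻¹ = cellCard H z := by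
  rw [cellCard, cellCard, inv_inv, ← inv_block, card_inv]

lemma cellCard_mul_left {h : G} (hh : h ∈ H) (z : G) : cellCard H (h * z) = cellCard H z := by
  have conj : ∀ x, h * x * h⁻¹ ∈ H ↔ x ∈ H := fun x => by
    rw [H.mul_mem_cancel_right (H.inv_mem hh), H.mul_mem_cancel_left hh]
  refine (card_nbij' (h * ·) (h⁻¹ * ·) ?_ ?_ ?_ ?_).symm <;> intro y <;>
    simp only [block, coe_filter, mem_univ, true_and, Set.mem_ofPred_eq, mk_eq_mk_iff,
      mul_inv_rev, inv_inv, inv_mul_cancel_left, mul_inv_cancel_left]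
  · rintro ⟨h1, h2⟩
    exact ⟨by simpa [mul_assoc] using (conj _).2 h1, by simpa [mul_assoc] using h2⟩
  · rintro ⟨h1, h2⟩
    refine ⟨(conj _).1 (by simpa [mul_assoc] using h1), by simpa [mul_assoc] using h2⟩
  all_goals simp

lemma cellCard_eq_of_doubleCoset_eq {y z : G} (h : δ y = δ z) : cellCard H y = cellCard H z := by
  obtain ⟨a, ha, c, hc, rfl⟩ := (DoubleCoset.eq H H z y).1 h.symm
  rw [mul_assoc, cellCard_mul_left H ha, ← cellCard_inv, mul_inv_rev,
    cellCard_mul_left H (H.inv_mem hc), cellCard_inv]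

lemma card_block_eq_cellCard {x : G} {q r : Quotient (QuotientGroup.rightRel H)}
    (hq : doubleCosetOf H q = δ x) (hr : doubleCosetOf H r = δ x⁻¹) :
    #(block ρ q r) = cellCard H x := by
  induction q using Quotient.ind with | _ z => ?_
  induction r using Quotient.ind with | _ w => ?_
  simp only [doubleCosetOf_mk] at hq hr
  have hwz : δ w⁻¹ = δ z := by
    rw [doubleCoset_inv_eq_of_eq H hr, inv_inv, hq]
  obtain ⟨a, ha, c, hc, hw⟩ := (DoubleCoset.eq H H z w⁻¹).1 hwz.symm
  have hz : ρ (a * z) = ρ z := (mk_eq_mk_iff H).2 (by simpa using H.inv_mem ha)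
  have hw' : ρ (a * z)⁻¹ = ρ w := (mk_eq_mk_iff H).2 (by
    rw [← inv_inv w, hw]; simpa [mul_assoc] using H.inv_mem hc)
  rw [← hz, ← hw', ← cellCard, cellCard_mul_left H ha, cellCard_eq_of_doubleCoset_eq H hq]

-- Sort the elements `y` of `H x` by the right coset `H y⁻¹`, which ranges over `H x⁻¹ H`.
lemma card_rightCosets_inv_mul_cellCard (x : G) :
    #{r | doubleCosetOf H r = δ x⁻¹} * cellCard H x = Nat.card H := by
  rw [← card_filter_mk_eq H x, card_eq_sum_card_fiberwise (f := fun y => ρ y⁻¹)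
    (t := {r | doubleCosetOf H r = δ x⁻¹}), sum_const_nat]
  · intro r hr
    rw [filter_filter]
    exact card_block_eq_cellCard H rfl (mem_filter.mp hr).2
  · intro y hy
    simpa using doubleCoset_inv_eq_of_eq H (congrArg (doubleCosetOf H) (mem_filter.mp hy).2)

lemma card_rightCosets_mul_cellCard (x : G) :
    #{q | doubleCosetOf H q = δ x} * cellCard H x = Nat.card H := by
  simpa [cellCard_inv] using card_rightCosets_inv_mul_cellCard H x⁻¹

lemma exists_involution_of_odd_card (hH : IsPerfectCode H) {x : G} (hx : δ x⁻¹ = δ x)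
    (hodd : Odd #{q | doubleCosetOf H q = δ x}) :
    ∃ z, δ z = δ x ∧ z⁻¹ = z := by
  obtain ⟨T, hT, hTinv⟩ := hH
  set TD : Finset G := {t | t ∈ T ∧ δ t = δ x}
  have hTD : TD⁻¹ = TD := by
    ext t
    have : δ t⁻¹ = δ x ↔ δ t = δ x :=
      ⟨fun h => by simpa [hx] using doubleCoset_inv_eq_of_eq H h,
        fun h => by rw [doubleCoset_inv_eq_of_eq H h, hx]⟩
    simp [TD, ← Set.mem_inv, hTinv, this]
  have hinj : Set.InjOn (fun t => ρ t) T := fun t ht t' ht' htt' =>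
    (hT t).unique ⟨ht', (mk_eq_mk_iff H).1 htt'⟩ ⟨ht, by simp⟩ |>.symm
  have himage : TD.image (fun t => ρ t) = ({q | doubleCosetOf H q = δ x} : Finset _) := by
    ext q
    obtain ⟨g, rfl⟩ := Quotient.exists_rep q
    simp only [mem_image, mem_filter, mem_univ, true_and, TD]
    refine ⟨fun ⟨t, ⟨_, htx⟩, htg⟩ => ?_, fun hg => ?_⟩
    · rw [← htg, doubleCosetOf_mk, htx]
    · obtain ⟨t, ⟨ht, htg⟩, -⟩ := hT g
      have := (mk_eq_mk_iff H).2 htg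
      exact ⟨t, ⟨ht, by rw [← doubleCosetOf_mk, ← this, hg]⟩, this.symm⟩
  rw [← himage, card_image_of_injOn (hinj.mono fun t ht => (mem_filter.mp ht).2.1)] at hodd
  obtain ⟨z, hz, hzz⟩ := exists_inv_eq_self_of_odd_card hTD hodd
  exact ⟨z, (mem_filter.mp hz).2.2, hzz⟩

lemma exists_inv_eq_of_weights {ι : Type*} [Fintype ι] (x : G)
    (E : ι → Quotient (QuotientGroup.rightRel H)) (hE : Function.Injective E)
    (hErange : ∀ q, (∃ a, E a = q) ↔ doubleCosetOf H q = δ x ∨ doubleCosetOf H q = δ x⁻¹)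
    (n : ι → ι → ℕ) (hn : ∀ a c, n a c = n c a) (hle : ∀ a c, n a c ≤ #(block ρ (E a) (E c)))
    (hdiag : ∀ a, Even (n a a) ∨ ∃ z ∈ block ρ (E a) (E a), z⁻¹ = z)
    {b : ℕ} (hsum : ∀ a, ∑ c, n a c = b) :
    ∃ U : Finset G, U⁻¹ = U ∧ (∀ z ∈ U, pairClass H z = pairClass H x) ∧
      ∀ v, pairClass H v = pairClass H x → #{z ∈ U | ρ z = ρ v} = b := by
  obtain ⟨U, hU, hUE, hUcard⟩ := exists_inv_eq_card_row_eq_sum ρ E hE n hn hle hdiag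
  refine ⟨U, hU, fun z hz => ?_, fun v hv => ?_⟩
  · obtain ⟨a, ha⟩ := hUE z hz
    exact (pairClass_eq_iff H).2 (by simpa using (hErange (ρ z)).1 ⟨a, ha.symm⟩)
  · obtain ⟨a, ha⟩ := (hErange (ρ v)).2 (by simpa using (pairClass_eq_iff H).1 hv)
    rw [← ha, hUcard, hsum]

lemma exists_inv_eq_of_selfPaired (hH : IsPerfectCode H) {x : G} (hx : δ x⁻¹ = δ x) {b : ℕ}
    (hb : b ≤ Nat.card H) :
    ∃ U : Finset G, U⁻¹ = U ∧ (∀ z ∈ U, pairClass H z = pairClass H x) ∧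
      ∀ v, pairClass H v = pairClass H x → #{z ∈ U | ρ z = ρ v} = b := by
  set m := #({q | doubleCosetOf H q = δ x} : Finset _)
  set ℓ := cellCard H x
  have hmℓ : m * ℓ = Nat.card H := card_rightCosets_mul_cellCard H x
  have : NeZero m := ⟨left_ne_zero_of_mul (hmℓ ▸ Nat.card_pos.ne')⟩
  obtain ⟨e, he, hemem⟩ := exists_injective_zmod _ (rfl : _ = m)
  have he_dc : ∀ i, doubleCosetOf H (e i) = δ x := fun i => by
    simpa using (hemem (e i)).1 ⟨i, rfl⟩
  have hblock : ∀ i j, #(block ρ (e i) (e j)) = ℓ := fun i j =>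
    card_block_eq_cellCard H (he_dc i) (by rw [he_dc j, hx])
  obtain ⟨s₁, hs₁⟩ := ZMod.exists_forall_add_self_eq
    (fun i => ∃ z ∈ block ρ (e i) (e i), z⁻¹ = z) fun hodd => by
      obtain ⟨z, hzx, hzz⟩ := exists_involution_of_odd_card H hH hx hodd
      obtain ⟨i, hi⟩ := (hemem (ρ z)).2 (by simpa using hzx)
      exact ⟨i, z, by simp [block, hi, hzz], hzz⟩
  obtain ⟨f, hfℓ, hfsum, hfeven⟩ :=
    exists_le_sum_eq_even_except s₁ (ℓ := ℓ) (b := b) (by rwa [ZMod.card, hmℓ])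
  refine exists_inv_eq_of_weights H x e he (fun q => ?_) (fun i j => f (i + j))
    (fun i j => by rw [add_comm]) (fun i j => (hblock i j).symm ▸ hfℓ _) (fun i => ?_)
    (fun i => by rw [← hfsum]; exact Equiv.sum_comp (Equiv.addLeft i) f)
  · rw [hemem, hx, or_self]; simp
  · rcases Nat.even_or_odd ℓ with hℓ | hℓ
    · by_cases hi : i + i = s₁
      · exact Or.inr (hs₁ i hi)
      · exact Or.inl (hfeven hℓ _ hi)
    · exact Or.inr (exists_inv_eq_self_of_odd_card (inv_block ρ _ _) ((hblock i i).symm ▸ hℓ))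

lemma exists_inv_eq_of_not_selfPaired {x : G} (hx : δ x⁻¹ ≠ δ x) {b : ℕ}
    (hb : b ≤ Nat.card H) :
    ∃ U : Finset G, U⁻¹ = U ∧ (∀ z ∈ U, pairClass H z = pairClass H x) ∧
      ∀ v, pairClass H v = pairClass H x → #{z ∈ U | ρ z = ρ v} = b := by
  set m := #({q | doubleCosetOf H q = δ x} : Finset _)
  set ℓ := cellCard H x
  have hmℓ : m * ℓ = Nat.card H := card_rightCosets_mul_cellCard H x
  have hm'ℓ := card_rightCosets_inv_mul_cellCard H x
  have : NeZero m := ⟨left_ne_zero_of_mul (hmℓ ▸ Nat.card_pos.ne')⟩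
  have hm' := Nat.eq_of_mul_eq_mul_right (Nat.pos_of_ne_zero (right_ne_zero_of_mul
    (hmℓ ▸ Nat.card_pos.ne'))) (hm'ℓ.trans hmℓ.symm)
  obtain ⟨e, he, hemem⟩ := exists_injective_zmod _ (rfl : _ = m)
  obtain ⟨e', he', he'mem⟩ := exists_injective_zmod _ hm'
  have he_dc : ∀ i, doubleCosetOf H (e i) = δ x := fun i => by
    simpa using (hemem (e i)).1 ⟨i, rfl⟩
  have he'_dc : ∀ j, doubleCosetOf H (e' j) = δ x⁻¹ := fun j => by
    simpa using (he'mem (e' j)).1 ⟨j, rfl⟩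
  obtain ⟨f, hfℓ, hfsum, -⟩ :=
    exists_le_sum_eq_even_except (0 : ZMod m) (ℓ := ℓ) (b := b) (by rwa [ZMod.card, hmℓ])
  let n : ZMod m ⊕ ZMod m → ZMod m ⊕ ZMod m → ℕ := fun a c => match a, c with
    | .inl i, .inr j => f (i + j)
    | .inr j, .inl i => f (i + j)
    | _, _ => 0
  refine exists_inv_eq_of_weights H x (Sum.elim e e') (he.sumElim he' fun i j h => hx ?_)
    (fun q => ?_) n ?_ ?_ (fun a => Or.inl ?_) ?_
  · rw [← he'_dc j, ← h, he_dc i]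
  · simp only [Sum.exists, Sum.elim_inl, Sum.elim_inr, hemem, he'mem, mem_filter, mem_univ,
      true_and]
  · rintro (i | i) (j | j) <;> rfl
  · rintro (i | i) (j | j)
    · exact Nat.zero_le _
    · exact (card_block_eq_cellCard H (he_dc i) (he'_dc j)).symm ▸ hfℓ _
    · exact (card_block_eq_cellCard H (he'_dc i) (by rw [inv_inv, he_dc j])).symm ▸
        (cellCard_inv H x).symm ▸ hfℓ _
    · exact Nat.zero_le _
  · rcases a with i | i <;> exact ⟨0, rfl⟩
  · rintro (i | j) <;> simp only [Fintype.sum_sum_type, n, sum_const_zero, zero_add, add_zero]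
    · rw [← hfsum]; exact Equiv.sum_comp (Equiv.addLeft i) f
    · rw [← hfsum]; exact Equiv.sum_comp (Equiv.addRight j) f

lemma exists_inv_eq_pairClass (hH : IsPerfectCode H) {b : ℕ} (hb : b ≤ Nat.card H)
    (p : Sym2 (DoubleCoset.Quotient (H : Set G) H)) :
    ∃ U : Finset G, U⁻¹ = U ∧ (∀ z ∈ U, pairClass H z = p) ∧
      ∀ v, pairClass H v = p → #{z ∈ U | ρ z = ρ v} = b := by
  by_cases hp : ∃ x, pairClass H x = p
  · obtain ⟨x, rfl⟩ := hp
    by_cases hx : δ x⁻¹ = δ x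
    · exact exists_inv_eq_of_selfPaired H hH hx hb
    · exact exists_inv_eq_of_not_selfPaired H hx hb
  · exact ⟨∅, inv_empty, by simp, fun v hv => absurd ⟨v, hv⟩ hp⟩

lemma exists_inv_eq_card_rightCoset_eq (hH : IsPerfectCode H) {b : ℕ} (hb : b ≤ Nat.card H) :
    ∃ B : Finset G, B⁻¹ = B ∧ (∀ z ∈ B, z ∉ H) ∧ ∀ v ∉ H, #{z ∈ B | ρ z = ρ v} = b := by
  choose U hU hUp hUcard using exists_inv_eq_pairClass H hH hb
  have hUinv : ∀ p z, z⁻¹ ∈ U p ↔ z ∈ U p := fun p z => by rw [← mem_inv', hU]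
  refine ⟨{z ∈ univ.biUnion fun y => U (pairClass H y) | z ∉ H}, ?_,
    fun z hz => (mem_filter.mp hz).2, fun v hv => ?_⟩
  · ext z
    simp [mem_inv', hUinv]
  · rw [← hUcard _ v rfl]
    congr 1
    ext z
    simp only [mem_filter, mem_biUnion, mem_univ, true_and]
    refine ⟨fun ⟨⟨⟨y, hzy⟩, _⟩, hzv⟩ => ⟨?_, hzv⟩, fun ⟨hzv, hρ⟩ => ⟨⟨⟨v, hzv⟩, fun hz => ?_⟩, hρ⟩⟩
    · rwa [← pairClass_eq_of_mk_eq H hzv, hUp _ z hzy]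
    · exact hv (by simpa using H.mul_mem ((mk_eq_mk_iff H).1 hρ) hz)

lemma exists_inv_eq_subset_subgroup {a : ℕ} (ha : a ≤ Nat.card H - 1)
    (hpar : Nat.gcd 2 (Nat.card H - 1) ∣ a) :
    ∃ A : Finset G, A⁻¹ = A ∧ (∀ z ∈ A, z ∈ H ∧ z ≠ 1) ∧ #A = a := by
  set Y : Finset G := ({z | z ∈ H} : Finset G).erase 1
  have hY : Y⁻¹ = Y := by ext z; simp [Y, mem_inv']
  have hYcard : #Y = Nat.card H - 1 := by
    rw [card_erase_of_mem (by simp), Nat.card_eq_fintype_card, Fintype.card_subtype]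
  obtain ⟨A, hAY, hA, hAcard⟩ := exists_subset_inv_eq_card_eq hY (hYcard ▸ ha) (by
    refine (Nat.even_or_odd a).imp_right fun hodd => ?_
    have h2 : 2 ∣ Nat.card H := by
      have : ¬ 2 ∣ Nat.card H - 1 := fun h => by
        rw [Nat.gcd_eq_left h] at hpar
        exact Nat.not_even_iff_odd.mpr hodd (even_iff_two_dvd.mpr hpar)
      have := Nat.card_pos (α := H)
      omega
    obtain ⟨g, hg⟩ := exists_prime_orderOf_dvd_card' 2 h2
    rw [← Subgroup.orderOf_coe] at hg
    refine ⟨g, ?_, inv_eq_self_of_orderOf_eq_two hg⟩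
    simp only [Y, mem_erase, mem_filter, mem_univ, SetLike.coe_mem, and_true]
    rintro h; simp [h] at hg)
  exact ⟨A, hA, fun z hz => by simpa [Y, and_comm] using hAY hz, hAcard⟩

lemma isPerfectCode_of_regular {S : Set G} (hS : S⁻¹ = S)
    (h0 : ∀ v ∈ (H : Set G), {h ∈ (H : Set G) | h * v⁻¹ ∈ S}.ncard = 0)
    (h1 : ∀ v ∉ (H : Set G), {h ∈ (H : Set G) | h * v⁻¹ ∈ S}.ncard = 1) : IsPerfectCode H := by
  have hSH : ∀ h ∈ H, h ∉ S := fun h hh hhS => by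
    have := (Set.ncard_eq_zero (Set.toFinite _)).1 (h0 1 H.one_mem)
    exact Set.eq_empty_iff_forall_notMem.1 this h ⟨hh, by simpa using hhS⟩
  refine ⟨insert 1 S, fun g => ?_, by rw [Set.inv_insert, inv_one, hS]⟩
  by_cases hg : g ∈ H
  · refine ⟨1, ⟨Set.mem_insert _ _, by simpa using H.inv_mem hg⟩, ?_⟩
    rintro t ⟨rfl | ht, htg⟩
    · rfl
    · exact absurd ht (hSH t (by simpa using H.mul_mem htg hg))
  · obtain ⟨w, hw⟩ := Set.ncard_eq_one.1 (h1 g⁻¹ (by simpa using hg))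
    have hmem : ∀ h, h ∈ H ∧ h * g ∈ S ↔ h = w := fun h => by simpa using Set.ext_iff.1 hw h
    refine ⟨w * g, ⟨Or.inr ((hmem w).2 rfl).2, by simpa using ((hmem w).2 rfl).1⟩, ?_⟩
    rintro t ⟨rfl | ht, htg⟩
    · exact absurd (by simpa using H.inv_mem htg) hg
    · rw [← (hmem (t * g⁻¹)).1 ⟨htg, by simpa using ht⟩, inv_mul_cancel_right]

lemma exists_regular_of_isPerfectCode (hH : IsPerfectCode H) {a b : ℕ}
    (ha : a ≤ Nat.card H - 1) (hb : b ≤ Nat.card H) (hpar : Nat.gcd 2 (Nat.card H - 1) ∣ a) :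
    ∃ S : Set G, S ⊆ {1}ᶜ ∧ S⁻¹ = S ∧
      (∀ v ∈ (H : Set G), {h ∈ (H : Set G) | h * v⁻¹ ∈ S}.ncard = a) ∧
      (∀ v ∉ (H : Set G), {h ∈ (H : Set G) | h * v⁻¹ ∈ S}.ncard = b) := by
  obtain ⟨A, hA, hAH, rfl⟩ := exists_inv_eq_subset_subgroup H ha hpar
  obtain ⟨B, hB, hBH, hBcard⟩ := exists_inv_eq_card_rightCoset_eq H hH hb
  refine ⟨↑(A ∪ B), fun z hz => ?_, by rw [← coe_inv, inv_union, hA, hB], fun v hv => ?_,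
    fun v hv => ?_⟩
  · rcases mem_union.mp hz with h | h
    · exact (hAH z h).2
    · exact fun h1 => hBH z h (h1 ▸ H.one_mem)
  · rw [ncard_eq_card_filter_mk]
    congr 1
    ext z
    simp only [mem_filter, mem_union, mk_eq_mk_iff_of_mem H (H.inv_mem hv)]
    exact ⟨fun ⟨h, hz⟩ => h.resolve_right fun hzB => hBH z hzB hz, fun h => ⟨Or.inl h, (hAH z h).1⟩⟩
  · rw [ncard_eq_card_filter_mk, ← hBcard v⁻¹ (by simpa using hv)]
    congr 1
    ext z
    simp only [mem_filter, mem_union]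
    refine ⟨fun ⟨h, hz⟩ => ⟨h.resolve_left fun hzA => hv ?_, hz⟩, fun ⟨h, hz⟩ => ⟨Or.inr h, hz⟩⟩
    simpa using (mk_eq_mk_iff_of_mem H (hAH z hzA).1 v⁻¹).1 hz.symm

end PerfectCode

theorem stmt10_general {G : Type*} [Group G] [Fintype G] (H : Subgroup G) :
    IsPerfectCode H ↔
      ∀ a b : ℕ, a ≤ Nat.card H - 1 → b ≤ Nat.card H →
        Nat.gcd 2 (Nat.card H - 1) ∣ a →
        ∃ S : Set G, S ⊆ {1}ᶜ ∧ S⁻¹ = S ∧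
          (∀ v ∈ (H : Set G), {h ∈ (H : Set G) | h * v⁻¹ ∈ S}.ncard = a) ∧
          (∀ v ∉ (H : Set G), {h ∈ (H : Set G) | h * v⁻¹ ∈ S}.ncard = b) := by
  refine ⟨fun hH _ _ => PerfectCode.exists_regular_of_isPerfectCode H hH, fun h => ?_⟩
  obtain ⟨S, -, hS, h0, h1⟩ := h 0 1 (Nat.zero_le _) Nat.card_pos (dvd_zero _)
  exact PerfectCode.isPerfectCode_of_regular H hS h0 h1

theorem stmt10 {G : Type*} [Group G] [Fintype G] (H : Subgroup G) (hH : H ≠ ⊥) :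
    IsPerfectCode H ↔
      ∀ a b : ℕ, a ≤ Nat.card H - 1 → b ≤ Nat.card H →
        Nat.gcd 2 (Nat.card H - 1) ∣ a →
        ∃ S : Set G, S ⊆ {1}ᶜ ∧ S⁻¹ = S ∧
          (∀ v ∈ (H : Set G), {h ∈ (H : Set G) | h * v⁻¹ ∈ S}.ncard = a) ∧
          (∀ v ∉ (H : Set G), {h ∈ (H : Set G) | h * v⁻¹ ∈ S}.ncard = b) :=
  stmt10_general H
end
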